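/- arXiv:2007.12257 — 3 statements merged into one kernel-verified Lean document; each statement's English description precedes it below -/
import Mathlib

section
/- Let D be a digraph, X ⊆ V(D), and k a positive integer. Then at least one of the following holds: (1) D contains k directed odd cycles such that every vertex is in at most two of them; (2) D contains k directed odd X-paths with pairwise distinct endpoints such that every vertex is in at most two of them; or (3) there is a vertex set Y of size at most 4k−1 such that D−Y contains no directed odd X-walk. -/
variable {V : Type}

/-- `w` is a directed walk of length `n` in the digraph with edge relation `R`. -/
def IsWalkOn (R : V → V → Prop) (w : ℕ → V) (n : ℕ) : Prop :=
  ∀ i < n, R (w i) (w (i + 1))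

/-- The set of vertices used by the walk `w` of length `n`. -/
def walkVerts (w : ℕ → V) (n : ℕ) : Set V :=
  {v | ∃ i ≤ n, w i = v}

/-- The set of directed edges used by the walk `w` of length `n`. -/
def walkEdges (w : ℕ → V) (n : ℕ) : Set (V × V) :=
  {e | ∃ i < n, w i = e.1 ∧ w (i + 1) = e.2}

/-- A directed path: a walk with no repeated vertices. -/
def IsPathOn (R : V → V → Prop) (w : ℕ → V) (n : ℕ) : Prop :=
  IsWalkOn R w n ∧ ∀ i ≤ n, ∀ j ≤ n, w i = w j → i = j

/-- A directed cycle of length `n`: a closed walk with no repeated vertices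
except that the last vertex equals the first. -/
def IsCycleOn (R : V → V → Prop) (w : ℕ → V) (n : ℕ) : Prop :=
  0 < n ∧ IsWalkOn R w n ∧ w n = w 0 ∧ ∀ i < n, ∀ j < n, w i = w j → i = j

/-- `v` is reachable from `u` by a directed walk all of whose vertices lie in `S`. -/
def ReachIn (R : V → V → Prop) (S : Set V) (u v : V) : Prop :=
  ∃ w n, IsWalkOn R w n ∧ w 0 = u ∧ w n = v ∧ ∀ i ≤ n, w i ∈ S

/-- Every two vertices of `C` are mutually reachable inside `S`. -/
def StrongIn (R : V → V → Prop) (S C : Set V) : Prop :=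
  ∀ u ∈ C, ∀ v ∈ C, ReachIn R S u v

/-- `C` is a strongly connected component of the subgraph induced on `S`. -/
def IsSCCOf (R : V → V → Prop) (S C : Set V) : Prop :=
  C.Nonempty ∧ C ⊆ S ∧ StrongIn R S C ∧
    ∀ C', C ⊆ C' → C' ⊆ S → StrongIn R S C' → C' = C

/-- A directed `X`-walk: endpoints in `X`, all internal vertices outside `X`. -/
def IsXWalk (R : V → V → Prop) (X : Set V) (w : ℕ → V) (n : ℕ) : Prop :=
  IsWalkOn R w n ∧ w 0 ∈ X ∧ w n ∈ X ∧ ∀ i, 0 < i → i < n → w i ∉ X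

/-- `S` meets every directed odd cycle. -/
def HitsOdd (R : V → V → Prop) (S : Set V) : Prop :=
  ∀ c m, IsCycleOn R c m → Odd m → ∃ i < m, c i ∈ S

/-- `S` meets every directed odd cycle of the subgraph induced on `W`. -/
def HitsOddIn (R : V → V → Prop) (S W : Set V) : Prop :=
  ∀ c m, IsCycleOn R c m → Odd m → walkVerts c m ⊆ W → ∃ i < m, c i ∈ S

/-- A half-integral packing of `k` directed odd cycles: every vertex lies in at most
two of the `k` cycles. -/
def HalfPackOdd (R : V → V → Prop) (k : ℕ) : Prop :=
  ∃ (c : Fin k → ℕ → V) (len : Fin k → ℕ),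
    (∀ i, IsCycleOn R (c i) (len i) ∧ Odd (len i)) ∧
    ∀ v, {i | v ∈ walkVerts (c i) (len i)}.ncard ≤ 2

/-- A linkage of order `s` from `A` to `B` avoiding `Z`: `s` pairwise vertex-disjoint
directed paths from `A` to `B`, none of which meets `Z`. -/
def ExLinkage (R : V → V → Prop) (A B Z : Set V) (s : ℕ) : Prop :=
  ∃ (P : Fin s → ℕ → V) (len : Fin s → ℕ),
    (∀ i, IsPathOn R (P i) (len i) ∧ P i 0 ∈ A ∧ P i (len i) ∈ B ∧
      Disjoint (walkVerts (P i) (len i)) Z) ∧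
    ∀ i j, i ≠ j → Disjoint (walkVerts (P i) (len i)) (walkVerts (P j) (len j))

/-- `T` is `r`-well-linked: for all disjoint equal-size subsets `A, B ⊆ T` of size at
least `r`, there are linkages of order `|A|` from `A` to `B` and from `B` to `A` in
`G - (T \ (A ∪ B))`. -/
def WellLinked (R : V → V → Prop) (T : Finset V) (r : ℕ) : Prop :=
  ∀ A B : Finset V, A ⊆ T → B ⊆ T → Disjoint A B → A.card = B.card → r ≤ A.card →
    ExLinkage R (↑A) (↑B) ((↑T : Set V) \ (↑A ∪ ↑B)) A.card ∧
    ExLinkage R (↑B) (↑A) ((↑T : Set V) \ (↑A ∪ ↑B)) A.card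

/-- `S` is `k`-linked: for every vertex set `X` with `|X| < k`, there is a unique
strongly connected component of `G - X` containing more than half of the vertices
of `S`. -/
def KLinked (R : V → V → Prop) (S : Finset V) (k : ℕ) : Prop :=
  ∀ X : Finset V, X.card < k →
    ∃! C : Set V, IsSCCOf R ((↑X : Set V)ᶜ) C ∧ S.card < 2 * ((↑S : Set V) ∩ C).ncard

/-- A bramble: a family of (vertex sets of) strongly connected subgraphs which
pairwise either intersect or are joined by edges in both directions. -/
def IsBramble (R : V → V → Prop) (B : Set (Set V)) : Prop :=
  (∀ C ∈ B, C.Nonempty ∧ StrongIn R C C) ∧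
  ∀ C₁ ∈ B, ∀ C₂ ∈ B, (C₁ ∩ C₂).Nonempty ∨
    ((∃ u ∈ C₁, ∃ v ∈ C₂, R u v) ∧ (∃ u ∈ C₂, ∃ v ∈ C₁, R u v))

/-- A walk in the underlying undirected graph of the digraph with edge relation `R`. -/
def IsUWalkOn (R : V → V → Prop) (w : ℕ → V) (n : ℕ) : Prop :=
  ∀ i < n, R (w i) (w (i + 1)) ∨ R (w (i + 1)) (w i)

/-- A separation `(C, D)` of a digraph: `C ∪ D = V` and there is no edge from
`C \ D` to `D \ C`. -/
def IsSeparation (R : V → V → Prop) (C D : Set V) : Prop :=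
  C ∪ D = Set.univ ∧ ∀ u ∈ C \ D, ∀ v ∈ D \ C, ¬ R u v

/-!
Record the parity of positions: in the digraph on `V × Bool` with the arcs `(u, b) → (v, !b)` for
`R u v`, except those entering `X × {false}` or leaving `X × {true}`, the walks from `X × {false}`
to `X × {true}` are exactly the lifts of the odd `X`-walks. Menger's theorem there (proved by
augmenting paths in the vertex-split digraph) gives either fewer than `4k` vertices meeting all of
them, whose projection is the set of (3), or `4k` disjoint ones. These project to odd `X`-walks
with distinct starts and distinct ends that use every vertex at most twice, once for each parity.
Each of them contains an odd cycle, or an odd `X`-path with the same ends. If `k` of them contain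
cycles we get (1). Otherwise more than `3k` paths remain; each shares an end with at most two
others (one ending where it starts, one starting where it ends), so `k` of them can be chosen
greedily with pairwise disjoint ends, giving (2).
-/

open Function

lemma walkVerts_mem (w : ℕ → V) {i n : ℕ} (h : i ≤ n) : w i ∈ walkVerts w n := ⟨i, h, rfl⟩

lemma walkVerts_comp {W : Type} (f : V → W) (w : ℕ → V) (n : ℕ) :
    walkVerts (fun j => f (w j)) n = f '' walkVerts w n := by
  ext v
  constructor
  · rintro ⟨i, hi, rfl⟩
    exact ⟨w i, walkVerts_mem w hi, rfl⟩
  · rintro ⟨_, ⟨i, hi, rfl⟩, rfl⟩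
    exact ⟨i, hi, rfl⟩

lemma walkEdges_finite (w : ℕ → V) (n : ℕ) : (walkEdges w n).Finite :=
  ((Set.finite_Iio n).image fun m => (w m, w (m + 1))).subset
    fun _ ⟨i, hi, h1, h2⟩ => ⟨i, hi, Prod.ext h1 h2⟩

lemma IsWalkOn.shift {R : V → V → Prop} {w : ℕ → V} {n : ℕ} (hw : IsWalkOn R w n)
    {i d : ℕ} (h : i + d ≤ n) : IsWalkOn R (fun m => w (i + m)) d :=
  fun m hm => hw (i + m) (by omega)

lemma walkVerts_shift_subset (w : ℕ → V) {i d n : ℕ} (h : i + d ≤ n) :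
    walkVerts (fun m => w (i + m)) d ⊆ walkVerts w n := by
  rintro _ ⟨m, hm, rfl⟩
  exact walkVerts_mem w (by omega)

def splice (w : ℕ → V) (i d : ℕ) : ℕ → V := fun x => if x ≤ i then w x else w (x + d)

lemma splice_zero (w : ℕ → V) (i d : ℕ) : splice w i d 0 = w 0 := by
  simp [splice]

lemma splice_sub {w : ℕ → V} {i d n : ℕ} (hin : i + d ≤ n) (heq : w i = w (i + d)) :
    splice w i d (n - d) = w n := by
  unfold splice
  split
  · rw [show n - d = i by omega, heq, show i + d = n by omega]
  · rw [Nat.sub_add_cancel (by omega)]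

lemma IsWalkOn.splice {R : V → V → Prop} {w : ℕ → V} {n i d : ℕ} (hw : IsWalkOn R w n)
    (hin : i + d ≤ n) (heq : w i = w (i + d)) : IsWalkOn R (splice w i d) (n - d) := by
  intro m hm
  unfold _root_.splice
  split_ifs with h1 h2 h2
  · exact hw m (by omega)
  · obtain rfl : m = i := by omega
    simpa only [heq, Nat.add_right_comm] using hw (m + d) (by omega)
  · omega
  · simpa only [Nat.add_right_comm] using hw (m + d) (by omega)

lemma walkVerts_splice_subset (w : ℕ → V) (i d n : ℕ) :
    walkVerts (splice w i d) (n - d) ⊆ walkVerts w n := by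
  rintro _ ⟨m, hm, rfl⟩
  unfold splice
  split
  · exact walkVerts_mem w (by omega)
  · exact walkVerts_mem w (by omega)

lemma IsWalkOn.exists_path {R : V → V → Prop} {w : ℕ → V} {n : ℕ} (hw : IsWalkOn R w n) :
    ∃ p m, IsPathOn R p m ∧ p 0 = w 0 ∧ p m = w n := by
  induction n using Nat.strong_induction_on generalizing w with
  | _ n IH =>
  by_cases hinj : ∀ i ≤ n, ∀ j ≤ n, w i = w j → i = j
  · exact ⟨w, n, ⟨hw, hinj⟩, rfl, rfl⟩
  push Not at hinj
  obtain ⟨i, hi, j, hj, hij, hne⟩ := hinj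
  wlog hlt : i < j generalizing i j
  · exact this j hj i hi hij.symm hne.symm (by omega)
  have heq : w i = w (i + (j - i)) := by rwa [Nat.add_sub_cancel' hlt.le]
  obtain ⟨p, m, hp, h0, hm⟩ := IH (n - (j - i)) (by omega) (hw.splice (by omega) heq)
  exact ⟨p, m, hp, h0.trans (splice_zero w _ _), hm.trans (splice_sub (by omega) heq)⟩

lemma IsWalkOn.exists_odd_cycle {R : V → V → Prop} {w : ℕ → V} {n : ℕ} (hw : IsWalkOn R w n)
    (hclosed : w n = w 0) (hodd : Odd n) :
    ∃ c m, IsCycleOn R c m ∧ Odd m ∧ walkVerts c m ⊆ walkVerts w n := by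
  induction n using Nat.strong_induction_on generalizing w with
  | _ n IH =>
  by_cases hinj : ∀ i < n, ∀ j < n, w i = w j → i = j
  · exact ⟨w, n, ⟨hodd.pos, hw, hclosed, hinj⟩, hodd, le_rfl⟩
  push Not at hinj
  obtain ⟨i, hi, j, hj, hij, hne⟩ := hinj
  wlog hlt : i < j generalizing i j
  · exact this j hj i hi hij.symm hne.symm (by omega)
  have heq : w i = w (i + (j - i)) := by rwa [Nat.add_sub_cancel' hlt.le]
  -- either the closed subwalk from `i` to `j` or what remains after cutting it out is odd
  rcases Nat.even_or_odd (j - i) with hd | hd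
  · obtain ⟨c, m, hc, hm, hsub⟩ := IH (n - (j - i)) (by omega) (hw.splice (by omega) heq)
      (by rw [splice_sub (by omega) heq, splice_zero, hclosed])
      (Nat.Odd.sub_even (by omega) hodd hd)
    exact ⟨c, m, hc, hm, hsub.trans (walkVerts_splice_subset w _ _ n)⟩
  · obtain ⟨c, m, hc, hm, hsub⟩ := IH (j - i) (by omega) (hw.shift (i := i) (by omega))
      (by simpa using heq.symm) hd
    exact ⟨c, m, hc, hm, hsub.trans (walkVerts_shift_subset w (by omega))⟩

lemma IsXWalk.splice {R : V → V → Prop} {X : Set V} {w : ℕ → V} {n i d : ℕ}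
    (hw : IsXWalk R X w n) (hin : i + d ≤ n) (heq : w i = w (i + d)) :
    IsXWalk R X (splice w i d) (n - d) := by
  obtain ⟨hwalk, h0, hn, hint⟩ := hw
  refine ⟨hwalk.splice hin heq, by rwa [splice_zero], by rwa [splice_sub hin heq], ?_⟩
  intro m hm0 hmn
  unfold _root_.splice
  split
  · exact hint m hm0 (by omega)
  · exact hint (m + d) (by omega) (by omega)

lemma IsXWalk.exists_odd_cycle_or_odd_path {R : V → V → Prop} {X : Set V} {w : ℕ → V} {n : ℕ}
    (hw : IsXWalk R X w n) (hodd : Odd n) :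
    (∃ c m, IsCycleOn R c m ∧ Odd m ∧ walkVerts c m ⊆ walkVerts w n) ∨
    (∃ p m, IsPathOn R p m ∧ IsXWalk R X p m ∧ Odd m ∧ walkVerts p m ⊆ walkVerts w n ∧
      p 0 = w 0 ∧ p m = w n) := by
  induction n using Nat.strong_induction_on generalizing w with
  | _ n IH =>
  by_cases hinj : ∀ i ≤ n, ∀ j ≤ n, w i = w j → i = j
  · exact .inr ⟨w, n, ⟨hw.1, hinj⟩, hw, hodd, le_rfl, rfl, rfl⟩
  by_cases hclosed : w n = w 0
  · exact .inl (hw.1.exists_odd_cycle hclosed hodd)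
  push Not at hinj
  obtain ⟨i, hi, j, hj, hij, hne⟩ := hinj
  wlog hlt : i < j generalizing i j
  · exact this j hj i hi hij.symm hne.symm (by omega)
  have hint := hw.2.2.2
  -- a repeated vertex in `X` could only be the pair of endpoints, so the repetition is internal
  have hi0 : 0 < i := by
    refine Nat.pos_of_ne_zero fun hi0 => ?_
    subst hi0
    rcases Nat.lt_or_ge j n with hjn | hjn
    · exact hint j hlt hjn (hij ▸ hw.2.1)
    · exact hclosed (by rw [hij, show j = n by omega])
  have hjn : j < n := lt_of_le_of_ne hj fun hjn => by
    subst hjn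
    exact hint i hi0 hlt (hij ▸ hw.2.2.1)
  have heq : w i = w (i + (j - i)) := by rwa [Nat.add_sub_cancel' hlt.le]
  rcases Nat.even_or_odd (j - i) with hd | hd
  · have hsub := walkVerts_splice_subset w i (j - i) n
    refine (IH (n - (j - i)) (by omega) (hw.splice (by omega) heq)
      (Nat.Odd.sub_even (by omega) hodd hd)).imp ?_ ?_
    · rintro ⟨c, m, hc, hm, hcw⟩
      exact ⟨c, m, hc, hm, hcw.trans hsub⟩
    · rintro ⟨p, m, hp, hpX, hm, hpw, hp0, hpm⟩
      exact ⟨p, m, hp, hpX, hm, hpw.trans hsub, hp0.trans (splice_zero w _ _),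
        hpm.trans (splice_sub (by omega) heq)⟩
  · obtain ⟨c, m, hc, hm, hsub⟩ := (hw.1.shift (i := i) (d := j - i) (by omega)).exists_odd_cycle
      (by simpa using heq.symm) hd
    exact .inl ⟨c, m, hc, hm, hsub.trans (walkVerts_shift_subset w (by omega))⟩

theorem Finset.exists_pairwise_not_rel_of_degree_le {ι : Type*} {r : ι → ι → Prop}
    (hr : ∀ i j, r i j → r j i) {d : ℕ} (I : Finset ι)
    (hdeg : ∀ i ∈ I, ∀ T ⊆ I, (∀ j ∈ T, j ≠ i ∧ r i j) → T.card ≤ d) :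
    ∃ J ⊆ I, I.card ≤ (d + 1) * J.card ∧ (J : Set ι).Pairwise fun i j => ¬ r i j := by
  classical
  induction I using Finset.strongInduction with
  | H I IH =>
  rcases I.eq_empty_or_nonempty with rfl | ⟨i, hi⟩
  · exact ⟨∅, subset_rfl, by simp, by simp⟩
  set I' := (I.erase i).filter fun j => ¬ r i j
  have hI' : I' ⊆ I.erase i := Finset.filter_subset _ _
  have hnbrs : ((I.erase i).filter fun j => r i j).card ≤ d :=
    hdeg i hi _ ((Finset.filter_subset _ _).trans (Finset.erase_subset _ _)) fun j hj => by
      simp only [Finset.mem_filter, Finset.mem_erase] at hj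
      exact ⟨hj.1.1, hj.2⟩
  have hcard : I.card ≤ I'.card + d + 1 := by
    have h1 : ((I.erase i).filter fun j => r i j).card + I'.card = (I.erase i).card :=
      Finset.card_filter_add_card_filter_not _
    have h2 := Finset.card_erase_add_one hi
    omega
  obtain ⟨J', hJ'I', hJ'card, hJ'⟩ :=
    IH I' ((Finset.ssubset_iff_of_subset (hI'.trans (Finset.erase_subset _ _))).2
      ⟨i, hi, fun h => by simpa using hI' h⟩)
      fun j hj T hT => hdeg j (Finset.mem_of_mem_erase (hI' hj)) T
        (hT.trans (hI'.trans (Finset.erase_subset _ _)))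
  have hiJ' : i ∉ J' := fun h => by simpa using hI' (hJ'I' h)
  refine ⟨insert i J', Finset.insert_subset hi (hJ'I'.trans (hI'.trans (Finset.erase_subset _ _))),
    ?_, ?_⟩
  · rw [Finset.card_insert_of_notMem hiJ']
    nlinarith
  · rw [Finset.coe_insert, Set.pairwise_insert]
    refine ⟨hJ', fun j hj _ => ?_⟩
    have hj' := (Finset.mem_filter.1 (hJ'I' hj)).2
    exact ⟨hj', fun h => hj' (hr _ _ h)⟩

lemma Finset.exists_injective_fin_of_le_card {ι : Type*} {J : Finset ι} {k : ℕ}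
    (hk : k ≤ J.card) : ∃ σ : Fin k → ι, Injective σ ∧ ∀ j, σ j ∈ J := by
  obtain ⟨e⟩ := Function.Embedding.nonempty_of_card_le (α := Fin k) (β := J) (by simpa using hk)
  exact ⟨fun j => e j, Subtype.val_injective.comp e.injective, fun j => (e j).2⟩

lemma ncard_setOf_mem_le_of_injective {ι κ : Type*} [Finite ι] {σ : κ → ι} (hσ : Injective σ)
    {S : κ → Set V} {T : ι → Set V} (hST : ∀ j, S j ⊆ T (σ j)) (v : V) :
    {j | v ∈ S j}.ncard ≤ {i | v ∈ T i}.ncard :=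
  calc {j | v ∈ S j}.ncard = (σ '' {j | v ∈ S j}).ncard :=
        (Set.ncard_image_of_injective _ hσ).symm
    _ ≤ {i | v ∈ T i}.ncard :=
        Set.ncard_le_ncard (Set.image_subset_iff.2 fun j hj => hST j hj) (Set.toFinite _)

lemma ncard_setOf_mem_image_fst_le {ι W : Type*} [Finite W] {S : ι → Set (V × W)}
    (hS : Pairwise (Disjoint on S)) (v : V) :
    {i | v ∈ Prod.fst '' S i}.ncard ≤ Nat.card W := by
  choose x hx hxv using fun i : {i | v ∈ Prod.fst '' S i} => i.2
  rw [← Nat.card_coe_set_eq]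
  refine Nat.card_le_card_of_injective (fun i => (x i).2) fun i i' h => Subtype.ext ?_
  have : x i = x i' := Prod.ext ((hxv i).trans (hxv i').symm) h
  by_contra hne
  exact Set.disjoint_left.1 (hS hne) (hx i) (this ▸ hx i')

def HalfPackOddXPaths (R : V → V → Prop) (X : Set V) (k : ℕ) : Prop :=
  ∃ (p : Fin k → ℕ → V) (len : Fin k → ℕ),
    (∀ i, IsPathOn R (p i) (len i) ∧ IsXWalk R X (p i) (len i) ∧ Odd (len i)) ∧
    (∀ v, {i | v ∈ walkVerts (p i) (len i)}.ncard ≤ 2) ∧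
    ∀ i j, i ≠ j → ({p i 0, p i (len i)} ∩ {p j 0, p j (len j)} : Set V) = ∅

section Selection

variable {ι : Type} [Fintype ι] {R : V → V → Prop} {X : Set V} {q : ι → ℕ → V} {len : ι → ℕ}

def EndsMeetStart (q : ι → ℕ → V) (len : ι → ℕ) (i j : ι) : Prop :=
  q i 0 = q j (len j) ∨ q i (len i) = q j 0

lemma card_le_two_of_endsMeetStart (hstart : Injective fun i => q i 0)
    (hend : Injective fun i => q i (len i)) (i : ι) (T : Finset ι)
    (hT : ∀ j ∈ T, EndsMeetStart q len i j) : T.card ≤ 2 := by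
  classical
  have hsub : T ⊆ Finset.univ.filter (fun j => q j (len j) = q i 0) ∪
      Finset.univ.filter (fun j => q j 0 = q i (len i)) := fun j hj => by
    rcases hT j hj with h | h <;> simp [h]
  refine (Finset.card_le_card hsub).trans ((Finset.card_union_le _ _).trans ?_)
  have h1 : (Finset.univ.filter (fun j => q j (len j) = q i 0)).card ≤ 1 :=
    Finset.card_le_one.2 fun a ha b hb => hend (by simp_all)
  have h2 : (Finset.univ.filter (fun j => q j 0 = q i (len i))).card ≤ 1 :=
    Finset.card_le_one.2 fun a ha b hb => hstart (by simp_all)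
  omega

theorem halfPackOdd_of_walks {k : ℕ} {Ic : Finset ι} (hk : k ≤ Ic.card)
    (hcover : ∀ v, {i | v ∈ walkVerts (q i) (len i)}.ncard ≤ 2)
    (hcyc : ∀ i ∈ Ic, ∃ c m, IsCycleOn R c m ∧ Odd m ∧ walkVerts c m ⊆ walkVerts (q i) (len i)) :
    HalfPackOdd R k := by
  obtain ⟨σ, hσ, hσI⟩ := Finset.exists_injective_fin_of_le_card hk
  choose c m hc hm hcq using fun j => hcyc (σ j) (hσI j)
  exact ⟨c, m, fun j => ⟨hc j, hm j⟩,
    fun v => (ncard_setOf_mem_le_of_injective hσ hcq v).trans (hcover v)⟩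

theorem halfPackOddXPaths_of_walks {k : ℕ} {Ip : Finset ι} (hk : 3 * k ≤ Ip.card + 2)
    (hcover : ∀ v, {i | v ∈ walkVerts (q i) (len i)}.ncard ≤ 2)
    (hstart : Injective fun i => q i 0) (hend : Injective fun i => q i (len i))
    (hpath : ∀ i ∈ Ip, ∃ p m, IsPathOn R p m ∧ IsXWalk R X p m ∧ Odd m ∧
      walkVerts p m ⊆ walkVerts (q i) (len i) ∧ p 0 = q i 0 ∧ p m = q i (len i)) :
    HalfPackOddXPaths R X k := by
  obtain ⟨J, hJI, hJcard, hJ⟩ := Ip.exists_pairwise_not_rel_of_degree_le (d := 2)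
    (r := EndsMeetStart q len) (fun i j h => h.symm.imp Eq.symm Eq.symm)
    fun i _ T _ hT => card_le_two_of_endsMeetStart hstart hend i T fun j hj => (hT j hj).2
  obtain ⟨σ, hσ, hσJ⟩ := Finset.exists_injective_fin_of_le_card (k := k) (J := J) (by omega)
  choose p m hp hpX hm hpq hp0 hpm using fun j => hpath (σ j) (hJI (hσJ j))
  refine ⟨p, m, fun j => ⟨hp j, hpX j, hm j⟩,
    fun v => (ncard_setOf_mem_le_of_injective hσ hpq v).trans (hcover v), fun i j hij => ?_⟩
  have hne : σ i ≠ σ j := hσ.ne hij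
  have hmeet := hJ (hσJ i) (hσJ j) hne
  have h0 := hstart.ne hne
  have h1 := hend.ne hne
  simp only [EndsMeetStart, not_or] at hmeet h0 h1
  ext v
  simp only [hp0, hpm, Set.mem_inter_iff, Set.mem_insert_iff, Set.mem_singleton_iff,
    Set.mem_empty_iff_false, iff_false]
  rintro ⟨rfl | rfl, h | h⟩ <;> simp_all

theorem halfPackOdd_or_halfPackOddXPaths_of_walks {k : ℕ} (hk : 4 * k ≤ Fintype.card ι)
    (hq : ∀ i, IsXWalk R X (q i) (len i) ∧ Odd (len i))
    (hcover : ∀ v, {i | v ∈ walkVerts (q i) (len i)}.ncard ≤ 2)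
    (hstart : Injective fun i => q i 0) (hend : Injective fun i => q i (len i)) :
    HalfPackOdd R k ∨ HalfPackOddXPaths R X k := by
  classical
  set HasCycle := fun i => ∃ c m, IsCycleOn R c m ∧ Odd m ∧ walkVerts c m ⊆ walkVerts (q i) (len i)
  by_cases hc : k ≤ (Finset.univ.filter HasCycle).card
  · exact .inl (halfPackOdd_of_walks hc hcover fun i hi => (Finset.mem_filter.1 hi).2)
  · have hsplit := Finset.card_filter_add_card_filter_not (s := Finset.univ) HasCycle
    refine .inr (halfPackOddXPaths_of_walks (Ip := Finset.univ.filter (¬ HasCycle ·))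
      (by rw [Finset.card_univ] at hsplit; omega) hcover hstart hend fun i hi => ?_)
    exact ((hq i).1.exists_odd_cycle_or_odd_path (hq i).2).resolve_left (Finset.mem_filter.1 hi).2

end Selection

lemma decide_odd_succ (j : ℕ) : decide (Odd (j + 1)) = !decide (Odd j) := by
  simp [Nat.odd_add_one, ← Nat.not_even_iff_odd]

lemma IsWalkOn.snd_eq_decide_odd {G : V × Bool → V × Bool → Prop}
    (hG : ∀ {x y}, G x y → y.2 = !x.2) {w : ℕ → V × Bool} {n : ℕ} (hw : IsWalkOn G w n)
    (h0 : (w 0).2 = false) : ∀ j ≤ n, (w j).2 = decide (Odd j) := by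
  intro j hj
  induction j with
  | zero => simpa using h0
  | succ j IH => rw [hG (hw j hj), IH (by omega), decide_odd_succ]

/-- The vertex-split of `Q`: `(v, false)` and `(v, true)` are the in- and the out-copy of `v`. -/
def splitDigraph (Q : V → V → Prop) (x y : V × Bool) : Prop :=
  (y.1 = x.1 ∧ x.2 = false ∧ y.2 = true) ∨ (Q x.1 y.1 ∧ x.2 = true ∧ y.2 = false)

namespace splitDigraph

variable {Q : V → V → Prop} {x y : V × Bool}

lemma snd_eq (h : splitDigraph Q x y) : y.2 = !x.2 := by
  rcases h with ⟨-, hx, hy⟩ | ⟨-, hx, hy⟩ <;> simp [hx, hy]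

lemma target_eq_of_source_in (h : splitDigraph Q x y) (hx : x.2 = false) : y = (x.1, true) := by
  rcases h with ⟨h1, -, h3⟩ | ⟨-, h2, -⟩
  · exact Prod.ext h1 h3
  · simp [hx] at h2

lemma source_eq_of_target_out (h : splitDigraph Q x y) (hy : y.2 = true) : x = (y.1, false) := by
  rcases h with ⟨h1, h2, -⟩ | ⟨-, -, h3⟩
  · exact Prod.ext h1.symm h2
  · simp [hy] at h3

lemma adj_of_target_in (h : splitDigraph Q x y) (hy : y.2 = false) : Q x.1 y.1 := by
  rcases h with ⟨-, -, h3⟩ | ⟨h1, -, -⟩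
  · simp [hy] at h3
  · exact h1

lemma adj_of_source_out (h : splitDigraph Q x y) (hx : x.2 = true) : Q x.1 y.1 := by
  rcases h with ⟨-, h2, -⟩ | ⟨h1, -, -⟩
  · simp [hx] at h2
  · exact h1

lemma notMem_sources {A : Set V} (hA : ∀ u v, Q u v → v ∉ A) (h : splitDigraph Q x y) :
    y ∉ A ×ˢ {false} :=
  fun ⟨hy1, hy2⟩ => hA _ _ (h.adj_of_target_in hy2) hy1

end splitDigraph

lemma IsWalkOn.splitLift {Q : V → V → Prop} {w : ℕ → V} {n : ℕ} (hw : IsWalkOn Q w n) :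
    IsWalkOn (splitDigraph Q) (fun j => (w (j / 2), decide (Odd j))) (2 * n + 1) := by
  intro j hj
  rcases Nat.even_or_odd j with hj2 | hj2
  · refine .inl ⟨congrArg w ?_, by simpa using hj2, by simp [hj2]⟩
    obtain ⟨c, rfl⟩ := hj2
    omega
  · refine .inr ⟨?_, by simpa using hj2, by simp [Nat.odd_add_one, hj2]⟩
    obtain ⟨c, rfl⟩ := hj2
    simpa [show (2 * c + 1 + 1) / 2 = c + 1 by omega, show (2 * c + 1) / 2 = c by omega]
      using hw c (by omega)

/-- The arc sets of families of disjoint walks which can stop only in `B`, such as the arc set of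
a linkage into `B`. -/
structure IsLinkageArcs (G : V → V → Prop) (B : Set V) (E : Set (V × V)) : Prop where
  finite : E.Finite
  adj : ∀ {x y}, (x, y) ∈ E → G x y
  out_unique : ∀ {x y y'}, (x, y) ∈ E → (x, y') ∈ E → y = y'
  in_unique : ∀ {u u' x}, (u, x) ∈ E → (u', x) ∈ E → u = u'
  exists_out : ∀ {u x}, (u, x) ∈ E → x ∈ B ∨ ∃ y, (x, y) ∈ E

namespace IsLinkageArcs

variable {G : V → V → Prop} {A B : Set V} {E : Set (V × V)}

lemma eq_and_start_eq_of_eq (hE : IsLinkageArcs G B E) {q q' : ℕ → V} {m m' : ℕ}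
    (hq : IsWalkOn (fun x y => (x, y) ∈ E) q m) (hq' : IsWalkOn (fun x y => (x, y) ∈ E) q' m')
    (h0 : ∀ u, (u, q 0) ∉ E) (h0' : ∀ u, (u, q' 0) ∉ E) :
    ∀ i ≤ m, ∀ j ≤ m', q i = q' j → i = j ∧ q 0 = q' 0 := by
  intro i
  induction i with
  | zero =>
    rintro - (_ | j) hj h
    · exact ⟨rfl, h⟩
    · exact absurd (h ▸ hq' j hj) (h0 _)
  | succ i IH =>
    rintro hi (_ | j) hj h
    · exact absurd (h ▸ hq i hi) (h0' _)
    · have := IH (by omega) j (by omega) (hE.in_unique (hq i hi) (h ▸ hq' j hj))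
      exact ⟨by omega, this.2⟩

lemma exists_walk_to (hE : IsLinkageArcs G B E) {s : V} (hs : ∃ y, (s, y) ∈ E)
    (hs' : ∀ u, (u, s) ∉ E) : ∃ q m, IsWalkOn (fun x y => (x, y) ∈ E) q m ∧ q 0 = s ∧ q m ∈ B := by
  classical
  have : ∀ x, ∃ y, (∃ y', (x, y') ∈ E) → (x, y) ∈ E := fun x =>
    if h : ∃ y, (x, y) ∈ E then ⟨h.choose, fun _ => h.choose_spec⟩ else ⟨x, fun h' => absurd h' h⟩
  choose nxt hnxt using this
  set q : ℕ → V := fun j => nxt^[j] s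
  have hstep : ∀ j, (∃ y, (q j, y) ∈ E) → (q j, q (j + 1)) ∈ E := fun j h => by
    simpa [q, Function.iterate_succ_apply'] using hnxt _ h
  -- `q` cannot run forever: it never repeats a vertex and stays among the tails of `E`
  have hstop : ∃ N, ¬ ∃ y, (q N, y) ∈ E := by
    by_contra! hall
    obtain ⟨a, b, hab, h⟩ := Set.Finite.exists_lt_map_eq_of_forall_mem (f := q)
      (fun j => (⟨_, (hall j).choose_spec, rfl⟩ : q j ∈ Prod.fst '' E)) (hE.finite.image Prod.fst)
    have hw : IsWalkOn (fun x y => (x, y) ∈ E) q b := fun j _ => hstep j (hall j)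
    have := (hE.eq_and_start_eq_of_eq hw hw hs' hs' a hab.le b le_rfl h).1
    omega
  have hmin : ∀ j < Nat.find hstop, (q j, q (j + 1)) ∈ E := fun j hj =>
    hstep j (not_not.1 (Nat.find_min hstop hj))
  refine ⟨q, Nat.find hstop, hmin, rfl, ?_⟩
  obtain ⟨N, hN⟩ : ∃ N, Nat.find hstop = N + 1 :=
    Nat.exists_eq_succ_of_ne_zero fun h => Nat.find_spec hstop (h ▸ hs)
  have := hE.exists_out (hmin N (by omega))
  rw [← hN] at this
  exact this.resolve_right (Nat.find_spec hstop)

lemma exists_linkage (hE : IsLinkageArcs G B E) {s : ℕ} {src : Fin s → V}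
    (hsrc : Injective src) (hA : ∀ i, src i ∈ A) (hout : ∀ i, ∃ y, (src i, y) ∈ E)
    (hin : ∀ i u, (u, src i) ∉ E) : ExLinkage G A B ∅ s := by
  choose q m hq hq0 hqB using fun i => hE.exists_walk_to (hout i) (hin i)
  have hstart : ∀ i u, (u, q i 0) ∉ E := fun i => hq0 i ▸ hin i
  have hmeet := fun i j => hE.eq_and_start_eq_of_eq (hq i) (hq j) (hstart i) (hstart j)
  refine ⟨q, m, fun i => ⟨⟨fun j hj => hE.adj (hq i j hj), fun a ha b hb h =>
    (hmeet i i a ha b hb h).1⟩, hq0 i ▸ hA i, hqB i, Set.disjoint_empty _⟩,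
    fun i j hij => Set.disjoint_left.2 ?_⟩
  rintro _ ⟨a, ha, rfl⟩ ⟨b, hb, h⟩
  exact hij (hsrc (by rw [← hq0, ← hq0]; exact (hmeet i j a ha b hb h.symm).2))

end IsLinkageArcs

lemma mem_iUnion_walkEdges {ι : Type*} {P : ι → ℕ → V} {len : ι → ℕ} {x y : V} :
    (x, y) ∈ ⋃ i, walkEdges (P i) (len i) ↔ ∃ i, ∃ m < len i, P i m = x ∧ P i (m + 1) = y := by
  simp [walkEdges]

section Linkage

variable {G : V → V → Prop} {B : Set V} {t : ℕ} {P : Fin t → ℕ → V} {len : Fin t → ℕ}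

lemma eq_and_eq_of_linkage (hP : ∀ i, IsPathOn G (P i) (len i))
    (hdisj : ∀ i j, i ≠ j → Disjoint (walkVerts (P i) (len i)) (walkVerts (P j) (len j)))
    {i j : Fin t} {a b : ℕ} (ha : a ≤ len i) (hb : b ≤ len j) (h : P i a = P j b) :
    i = j ∧ a = b := by
  obtain rfl | hij := eq_or_ne i j
  · exact ⟨rfl, (hP i).2 a ha b hb h⟩
  · exact absurd (walkVerts_mem (P j) hb)
      (Set.disjoint_left.1 (hdisj i j hij) (by rw [← h]; exact walkVerts_mem (P i) ha))

lemma IsLinkageArcs.of_linkage (hP : ∀ i, IsPathOn G (P i) (len i))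
    (hB : ∀ i, P i (len i) ∈ B)
    (hdisj : ∀ i j, i ≠ j → Disjoint (walkVerts (P i) (len i)) (walkVerts (P j) (len j))) :
    IsLinkageArcs G B (⋃ i, walkEdges (P i) (len i)) where
  finite := Set.finite_iUnion fun i => walkEdges_finite _ _
  adj h := by
    obtain ⟨i, m, hm, rfl, rfl⟩ := mem_iUnion_walkEdges.1 h
    exact (hP i).1 m hm
  out_unique h h' := by
    obtain ⟨i, a, ha, rfl, rfl⟩ := mem_iUnion_walkEdges.1 h
    obtain ⟨j, b, hb, hab, rfl⟩ := mem_iUnion_walkEdges.1 h'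
    obtain ⟨rfl, rfl⟩ := eq_and_eq_of_linkage hP hdisj hb.le ha.le hab
    rfl
  in_unique h h' := by
    obtain ⟨i, a, ha, rfl, rfl⟩ := mem_iUnion_walkEdges.1 h
    obtain ⟨j, b, hb, rfl, hab⟩ := mem_iUnion_walkEdges.1 h'
    obtain ⟨rfl, hab⟩ := eq_and_eq_of_linkage hP hdisj (Nat.succ_le_of_lt hb)
      (Nat.succ_le_of_lt ha) hab
    rw [show a = b by omega]
  exists_out h := by
    obtain ⟨i, a, ha, -, rfl⟩ := mem_iUnion_walkEdges.1 h
    rcases Nat.lt_or_ge (a + 1) (len i) with h' | h'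
    · exact .inr ⟨P i (a + 1 + 1), mem_iUnion_walkEdges.2 ⟨i, a + 1, h', rfl, rfl⟩⟩
    · exact .inl (show a + 1 = len i by omega ▸ hB i)

lemma exists_start_or_mem_of_mem_iUnion_walkEdges {x y : V}
    (h : (x, y) ∈ ⋃ i, walkEdges (P i) (len i)) :
    (∃ i, P i 0 = x) ∨ ∃ u, (u, x) ∈ ⋃ i, walkEdges (P i) (len i) := by
  obtain ⟨i, _ | a, ha, rfl, -⟩ := mem_iUnion_walkEdges.1 h
  · exact .inl ⟨i, rfl⟩
  · exact .inr ⟨P i a, mem_iUnion_walkEdges.2 ⟨i, a, by omega, rfl, rfl⟩⟩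

end Linkage

def residualDigraph (G : V → V → Prop) (E : Set (V × V)) (x y : V) : Prop :=
  (G x y ∧ (x, y) ∉ E ∧ (y, x) ∉ E) ∨ (y, x) ∈ E

def SeparatesArcs (G : V → V → Prop) (A B : Set V) (F : Set (V × V)) : Prop :=
  ∀ w n, IsWalkOn G w n → w 0 ∈ A → w n ∈ B → ∃ i < n, (w i, w (i + 1)) ∈ F

def Separates (G : V → V → Prop) (A B : Set V) (Y : Set V) : Prop :=
  ∀ w n, IsWalkOn G w n → w 0 ∈ A → w n ∈ B → ∃ i ≤ n, w i ∈ Y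

lemma exists_mem_notMem_succ {S : Set V} {w : ℕ → V} :
    ∀ {n : ℕ}, w 0 ∈ S → w n ∉ S → ∃ i < n, w i ∈ S ∧ w (i + 1) ∉ S
  | 0, h0, hn => absurd h0 hn
  | n + 1, h0, hn => by
    by_cases h : w n ∈ S
    · exact ⟨n, n.lt_succ_self, h, hn⟩
    · obtain ⟨i, hi, hiS⟩ := exists_mem_notMem_succ h0 h
      exact ⟨i, by omega, hiS⟩

section ResidualClosed

variable {G : V → V → Prop} {E : Set (V × V)} {S : Set V}

lemma mem_of_residual_closed (hS : ∀ x ∈ S, ∀ y, residualDigraph G E x y → y ∈ S)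
    {w : ℕ → V} {n : ℕ} (hw : walkEdges w n ⊆ E) {j l : ℕ} (hjl : j ≤ l) (hl : l ≤ n)
    (h : w l ∈ S) : w j ∈ S := by
  obtain ⟨d, rfl⟩ := Nat.exists_eq_add_of_le hjl
  induction d generalizing j with
  | zero => simpa using h
  | succ d IH =>
    have : w (j + 1) ∈ S := IH (by omega) (by omega) (by rwa [Nat.add_right_comm, Nat.add_assoc])
    exact hS _ this _ (.inr (hw ⟨j, by omega, rfl, rfl⟩))

lemma separatesArcs_of_residual_closed (hS : ∀ x ∈ S, ∀ y, residualDigraph G E x y → y ∈ S)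
    {A B : Set V} (hAS : A ⊆ S) (hSB : Disjoint S B) :
    SeparatesArcs G A B {e ∈ E | e.1 ∈ S ∧ e.2 ∉ S} := by
  intro w n hw h0 hn
  obtain ⟨i, hi, hiS, hiS'⟩ :=
    exists_mem_notMem_succ (hAS h0) fun h => Set.disjoint_left.1 hSB h hn
  refine ⟨i, hi, ?_, hiS, hiS'⟩
  by_contra hE
  by_cases hE' : (w (i + 1), w i) ∈ E
  · exact hiS' (hS _ hiS _ (.inr hE'))
  · exact hiS' (hS _ hiS _ (.inl ⟨hw i hi, hE, hE'⟩))

theorem exists_arcCut_of_residual_closed {t : ℕ} {P : Fin t → ℕ → V} {len : Fin t → ℕ}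
    (hS : ∀ x ∈ S, ∀ y, residualDigraph G (⋃ i, walkEdges (P i) (len i)) x y → y ∈ S)
    {A B : Set V} (hAS : A ⊆ S) (hSB : Disjoint S B) :
    ∃ F : Set (V × V), F.Finite ∧ F.ncard ≤ t ∧ SeparatesArcs G A B F := by
  set C := fun i => {e ∈ walkEdges (P i) (len i) | e.1 ∈ S ∧ e.2 ∉ S}
  have hCfin : ∀ i, (C i).Finite := fun i => (walkEdges_finite _ _).subset fun _ h => h.1
  -- each path leaves `S` at most once, since `S` is closed under going back along a path
  have hC : ∀ i, (C i).ncard ≤ 1 := by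
    intro i
    refine (Set.ncard_le_one (hCfin i)).2 ?_
    rintro ⟨-, -⟩ ⟨⟨a, ha, rfl, rfl⟩, haS, haS'⟩ ⟨-, -⟩ ⟨⟨b, hb, rfl, rfl⟩, hbS, hbS'⟩
    have hsub : walkEdges (P i) (len i) ⊆ ⋃ i, walkEdges (P i) (len i) :=
      Set.subset_iUnion (fun i => walkEdges (P i) (len i)) i
    rcases lt_trichotomy a b with hab | rfl | hab
    · exact absurd (mem_of_residual_closed hS hsub hab hb.le hbS) haS'
    · rfl
    · exact absurd (mem_of_residual_closed hS hsub hab ha.le haS) hbS'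
  refine ⟨⋃ i, C i, Set.finite_iUnion hCfin, ?_, fun w n hw h0 hn => ?_⟩
  · calc (⋃ i, C i).ncard ≤ ∑ i, (C i).ncard := Set.ncard_iUnion_le_of_fintype C
      _ ≤ ∑ _i : Fin t, 1 := Finset.sum_le_sum fun i _ => hC i
      _ = t := by simp
  · obtain ⟨j, hj, ⟨hE, hjS⟩⟩ := separatesArcs_of_residual_closed hS hAS hSB w n hw h0 hn
    obtain ⟨i, hi⟩ := Set.mem_iUnion.1 hE
    exact ⟨j, hj, Set.mem_iUnion.2 ⟨i, hi, hjS⟩⟩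

end ResidualClosed

lemma ReachIn.refl {R : V → V → Prop} {S : Set V} {u : V} (hu : u ∈ S) : ReachIn R S u u :=
  ⟨fun _ => u, 0, fun _ h => absurd h (Nat.not_lt_zero _), rfl, rfl, fun _ _ => hu⟩

lemma ReachIn.tail {R : V → V → Prop} {S : Set V} {u x y : V} (h : ReachIn R S u x) (hxy : R x y)
    (hy : y ∈ S) : ReachIn R S u y := by
  obtain ⟨w, n, hw, h0, hn, hS⟩ := h
  refine ⟨fun j => if j ≤ n then w j else y, n + 1, fun j hj => ?_, by simpa using h0,
    by simp, fun j _ => ?_⟩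
  · rcases Nat.lt_or_ge j n with hjn | hjn
    · simpa [hjn.le, Nat.succ_le_of_lt hjn] using hw j hjn
    · obtain rfl : j = n := by omega
      simpa [hn] using hxy
  · dsimp only
    split
    · exact hS j ‹_›
    · exact hy

def augmentAlong (E : Set (V × V)) (p : ℕ → V) (n : ℕ) : Set (V × V) :=
  {e ∈ E | ∀ m < n, (p (m + 1), p m) ≠ e} ∪
    {e | ∃ m < n, (p m, p (m + 1)) = e ∧ (p (m + 1), p m) ∉ E}

lemma mem_augmentAlong_of_notMem {E : Set (V × V)} {p : ℕ → V} {n m : ℕ} (hm : m < n)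
    (h : (p (m + 1), p m) ∉ E) : (p m, p (m + 1)) ∈ augmentAlong E p n :=
  .inr ⟨m, hm, rfl, h⟩

structure IsAugmentingPath (G : V → V → Prop) (A B : Set V) (E : Set (V × V)) (p : ℕ → V)
    (n : ℕ) : Prop where
  isPathOn : IsPathOn (residualDigraph G E) p n
  start_mem : p 0 ∈ A
  end_mem : p n ∈ B

namespace IsAugmentingPath

section General

variable {G : V → V → Prop} {A B : Set V} {E : Set (V × V)} {p : ℕ → V} {n : ℕ}

lemma injective (hp : IsAugmentingPath G A B E p n) {a b : ℕ} (ha : a ≤ n) (hb : b ≤ n)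
    (h : p a = p b) : a = b :=
  hp.isPathOn.2 a ha b hb h

lemma adj_of_notMem (hp : IsAugmentingPath G A B E p n) {m : ℕ} (hm : m < n)
    (h : (p (m + 1), p m) ∉ E) : G (p m) (p (m + 1)) ∧ (p m, p (m + 1)) ∉ E :=
  ((hp.isPathOn.1 m hm).resolve_right h).imp_right And.left

lemma continues (hp : IsAugmentingPath G A B E p n) {l : ℕ} (hl : l < n) :
    p (l + 1) ∈ B ∨ (p (l + 1), p (l + 1 + 1)) ∈ augmentAlong E p n ∨
      (l + 1 < n ∧ (p (l + 1 + 1), p (l + 1)) ∈ E) := by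
  rcases Nat.lt_or_ge (l + 1) n with hlt | hge
  · by_cases h : (p (l + 1 + 1), p (l + 1)) ∈ E
    · exact .inr (.inr ⟨hlt, h⟩)
    · exact .inr (.inl (mem_augmentAlong_of_notMem hlt h))
  · exact .inl (show l + 1 = n by omega ▸ hp.end_mem)

end General

variable {Q : V → V → Prop} {A B : Set V} {E : Set ((V × Bool) × (V × Bool))}
  {p : ℕ → V × Bool} {n : ℕ}

lemma start_snd (hp : IsAugmentingPath (splitDigraph Q) (A ×ˢ {false}) (B ×ˢ {true}) E p n) :
    (p 0).2 = false :=
  hp.start_mem.2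

lemma end_snd (hp : IsAugmentingPath (splitDigraph Q) (A ×ˢ {false}) (B ×ˢ {true}) E p n) :
    (p n).2 = true :=
  hp.end_mem.2

lemma notMem_sources (hA : ∀ u v, Q u v → v ∉ A)
    (hEG : ∀ {x y}, (x, y) ∈ E → splitDigraph Q x y)
    (hp : IsAugmentingPath (splitDigraph Q) (A ×ˢ {false}) (B ×ˢ {true}) E p n) {m : ℕ}
    (hm0 : 0 < m) (hmn : m ≤ n) : p m ∉ A ×ˢ {false} := by
  intro hmA
  have hin : ∀ {u}, splitDigraph Q u (p m) → False := fun h => h.notMem_sources hA hmA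
  obtain ⟨l, rfl⟩ : ∃ l, m = l + 1 := ⟨m - 1, by omega⟩
  have hF : (p (l + 1)).2 = false := hmA.2
  rcases hp.isPathOn.1 l (by omega) with ⟨hG, -⟩ | hback
  · exact hin hG
  -- the path arrived at the in-copy `p (l + 1)` backwards from its out-copy `p l`; it cannot
  -- leave it backwards (no arc enters an in-copy of `A`) nor forwards (to `p l` again)
  have hl : p l = ((p (l + 1)).1, true) := (hEG hback).target_eq_of_source_in hF
  have hlt : l + 1 < n := lt_of_le_of_ne hmn fun h => by simp [h, hp.end_snd] at hF
  rcases hp.isPathOn.1 (l + 1) hlt with ⟨hG, -⟩ | hback'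
  · have := hp.injective (by omega) (by omega) ((hG.target_eq_of_source_in hF).trans hl.symm)
    omega
  · exact hin (hEG hback')

lemma first_step (hA : ∀ u v, Q u v → v ∉ A)
    (hEG : ∀ {x y}, (x, y) ∈ E → splitDigraph Q x y)
    (hp : IsAugmentingPath (splitDigraph Q) (A ×ˢ {false}) (B ×ˢ {true}) E p n) :
    0 < n ∧ (p 1, p 0) ∉ E ∧ ∀ y, (p 0, y) ∉ E := by
  have hn : 0 < n := Nat.pos_of_ne_zero fun h => by
    have := hp.end_snd
    simp [h, hp.start_snd] at this
  have hfwd : (p 1, p 0) ∉ E := fun h => (hEG h).notMem_sources hA hp.start_mem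
  refine ⟨hn, hfwd, fun y hy => ?_⟩
  obtain ⟨hG, hnot⟩ := hp.adj_of_notMem hn hfwd
  exact hnot (by rwa [hG.target_eq_of_source_in hp.start_snd,
    ← (hEG hy).target_eq_of_source_in hp.start_snd])

lemma eq_of_mem_out (hE : IsLinkageArcs (splitDigraph Q) (B ×ˢ {true}) E)
    (hEin : ∀ {x y}, (x, y) ∈ E → x ∈ A ×ˢ {false} ∨ ∃ u, (u, x) ∈ E)
    (hp : IsAugmentingPath (splitDigraph Q) (A ×ˢ {false}) (B ×ˢ {true}) E p n) {m : ℕ}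
    (hm : m < n) (hfwd : (p (m + 1), p m) ∉ E) {y : V × Bool} (hy : (p m, y) ∈ E)
    (hyr : ∀ l < n, (p (l + 1), p l) ≠ (p m, y)) : y = p (m + 1) := by
  obtain ⟨hG, -⟩ := hp.adj_of_notMem hm hfwd
  cases hx : (p m).2
  · exact ((hE.adj hy).target_eq_of_source_in hx).trans (hG.target_eq_of_source_in hx).symm
  -- the path entered the out-copy `p m` backwards along its arc of `E`, which is removed
  exfalso
  obtain ⟨u, hu⟩ := (hEin hy).resolve_left fun h => by simp [hx] at h
  obtain ⟨l, rfl⟩ : ∃ l, m = l + 1 :=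
    Nat.exists_eq_succ_of_ne_zero fun h => by simp [h, hp.start_snd] at hx
  rcases hp.isPathOn.1 l (by omega) with ⟨hG', hnot', -⟩ | hback
  · rw [hG'.source_eq_of_target_out hx, ← (hE.adj hu).source_eq_of_target_out hx] at hnot'
    exact hnot' hu
  · exact hyr l (by omega) (by rw [hE.out_unique hy hback])

lemma eq_of_mem_in (hE : IsLinkageArcs (splitDigraph Q) (B ×ˢ {true}) E)
    (hp : IsAugmentingPath (splitDigraph Q) (A ×ˢ {false}) (B ×ˢ {true}) E p n) {m : ℕ}
    (hm : m < n) (hfwd : (p (m + 1), p m) ∉ E) {u : V × Bool} (hu : (u, p (m + 1)) ∈ E)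
    (hur : ∀ l < n, (p (l + 1), p l) ≠ (u, p (m + 1))) : u = p m := by
  obtain ⟨hG, -⟩ := hp.adj_of_notMem hm hfwd
  cases hx : (p (m + 1)).2
  swap
  · exact ((hE.adj hu).source_eq_of_target_out hx).trans (hG.source_eq_of_target_out hx).symm
  -- the path leaves the in-copy `p (m + 1)` backwards along its arc of `E`, which is removed
  exfalso
  obtain ⟨v, hv⟩ := (hE.exists_out hu).resolve_left fun h => by simp [hx] at h
  have hlt : m + 1 < n := lt_of_le_of_ne hm fun h => by simp [h, hp.end_snd] at hx
  rcases hp.isPathOn.1 (m + 1) hlt with ⟨hG', hnot', -⟩ | hback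
  · rw [hG'.target_eq_of_source_in hx, ← (hE.adj hv).target_eq_of_source_in hx] at hnot'
    exact hnot' hv
  · exact hur (m + 1) hlt (by rw [hE.in_unique hu hback])

theorem isLinkageArcs_augmentAlong (hE : IsLinkageArcs (splitDigraph Q) (B ×ˢ {true}) E)
    (hEin : ∀ {x y}, (x, y) ∈ E → x ∈ A ×ˢ {false} ∨ ∃ u, (u, x) ∈ E)
    (hp : IsAugmentingPath (splitDigraph Q) (A ×ˢ {false}) (B ×ˢ {true}) E p n) :
    IsLinkageArcs (splitDigraph Q) (B ×ˢ {true}) (augmentAlong E p n) where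
  finite := (hE.finite.subset fun _ h => h.1).union <|
    (walkEdges_finite p n).subset fun _ ⟨m, hm, he, _⟩ => ⟨m, hm, by rw [← he], by rw [← he]⟩
  adj := by
    rintro x y (⟨h, -⟩ | ⟨m, hm, he, hfwd⟩)
    · exact hE.adj h
    · obtain ⟨rfl, rfl⟩ := Prod.mk.inj he
      exact (hp.adj_of_notMem hm hfwd).1
  out_unique := by
    rintro x y y' (⟨hy, hyr⟩ | ⟨m, hm, he, hfwd⟩) (⟨hy', hyr'⟩ | ⟨m', hm', he', hfwd'⟩)
    · exact hE.out_unique hy hy'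
    · obtain ⟨rfl, rfl⟩ := Prod.mk.inj he'
      exact hp.eq_of_mem_out hE hEin hm' hfwd' hy hyr
    · obtain ⟨rfl, rfl⟩ := Prod.mk.inj he
      exact (hp.eq_of_mem_out hE hEin hm hfwd hy' hyr').symm
    · obtain ⟨rfl, rfl⟩ := Prod.mk.inj he
      obtain ⟨h, rfl⟩ := Prod.mk.inj he'
      rw [hp.injective hm.le hm'.le h.symm]
  in_unique := by
    rintro u u' x (⟨hu, hur⟩ | ⟨m, hm, he, hfwd⟩) (⟨hu', hur'⟩ | ⟨m', hm', he', hfwd'⟩)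
    · exact hE.in_unique hu hu'
    · obtain ⟨rfl, rfl⟩ := Prod.mk.inj he'
      exact hp.eq_of_mem_in hE hm' hfwd' hu hur
    · obtain ⟨rfl, rfl⟩ := Prod.mk.inj he
      exact (hp.eq_of_mem_in hE hm hfwd hu' hur').symm
    · obtain ⟨rfl, rfl⟩ := Prod.mk.inj he
      obtain ⟨rfl, h⟩ := Prod.mk.inj he'
      have := hp.injective (by omega) (by omega) h.symm
      rw [show m' = m by omega]
  exists_out := by
    rintro u x (⟨hx, hxr⟩ | ⟨m, hm, he, hfwd⟩)
    · rcases hE.exists_out hx with hB' | ⟨v, hv⟩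
      · exact .inl hB'
      by_cases hvr : ∀ l < n, (p (l + 1), p l) ≠ (x, v)
      · exact .inr ⟨v, .inl ⟨hv, hvr⟩⟩
      push Not at hvr
      obtain ⟨l, hl, he⟩ := hvr
      obtain ⟨rfl, rfl⟩ := Prod.mk.inj he
      rcases hp.continues hl with h | h | ⟨hlt, hback⟩
      · exact .inl h
      · exact .inr ⟨_, h⟩
      · exact absurd (by rw [hE.in_unique hx hback]) (hxr (l + 1) hlt)
    · obtain ⟨rfl, rfl⟩ := Prod.mk.inj he
      rcases hp.continues hm with h | h | ⟨-, hback⟩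
      · exact .inl h
      · exact .inr ⟨_, h⟩
      rcases hE.exists_out hback with hB' | ⟨v, hv⟩
      · exact .inl hB'
      refine .inr ⟨v, .inl ⟨hv, fun l hl he' => hfwd ?_⟩⟩
      obtain ⟨h, rfl⟩ := Prod.mk.inj he'
      obtain rfl : l = m := by have := hp.injective (by omega) (by omega) h; omega
      exact hv

end IsAugmentingPath

section Menger

variable {Q : V → V → Prop} {A B : Set V}

theorem IsAugmentingPath.linkage_succ (hA : ∀ u v, Q u v → v ∉ A) {t : ℕ}
    {P : Fin t → ℕ → V × Bool} {len : Fin t → ℕ}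
    (hP : ∀ i, IsPathOn (splitDigraph Q) (P i) (len i) ∧ P i 0 ∈ A ×ˢ {false} ∧
      P i (len i) ∈ B ×ˢ {true} ∧ Disjoint (walkVerts (P i) (len i)) ∅)
    (hdisj : ∀ i j, i ≠ j → Disjoint (walkVerts (P i) (len i)) (walkVerts (P j) (len j)))
    {p : ℕ → V × Bool} {n : ℕ} (hp : IsAugmentingPath (splitDigraph Q) (A ×ˢ {false})
      (B ×ˢ {true}) (⋃ i, walkEdges (P i) (len i)) p n) :
    ExLinkage (splitDigraph Q) (A ×ˢ {false}) (B ×ˢ {true}) ∅ (t + 1) := by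
  have hE : IsLinkageArcs (splitDigraph Q) (B ×ˢ {true}) (⋃ i, walkEdges (P i) (len i)) :=
    .of_linkage (fun i => (hP i).1) (fun i => (hP i).2.2.1) hdisj
  obtain ⟨hn, hfwd, hp0E⟩ := hp.first_step hA hE.adj
  have hE' := hp.isLinkageArcs_augmentAlong hE fun h =>
    (exists_start_or_mem_of_mem_iUnion_walkEdges h).imp_left fun ⟨i, hi⟩ => hi ▸ (hP i).2.1
  have hsrcA : ∀ i, (Fin.cons (p 0) fun i => P i 0 : Fin (t + 1) → V × Bool) i ∈ A ×ˢ {false} :=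
    Fin.cases hp.start_mem fun i => (hP i).2.1
  -- the new source `p 0` had no arc of `E`; the old sources keep their first arcs
  have hsrcE : ∀ i, (P i 0, P i 1) ∈ ⋃ i, walkEdges (P i) (len i) := fun i => by
    refine Set.mem_iUnion.2 ⟨i, 0, Nat.pos_of_ne_zero fun h => ?_, rfl, rfl⟩
    have h0 := (hP i).2.1.2
    have hlen := (hP i).2.2.1.2
    simp_all
  refine hE'.exists_linkage ((Fin.cons_injective_iff).2 ⟨?_, fun i j h => ?_⟩) hsrcA
    (Fin.cases ⟨p 1, mem_augmentAlong_of_notMem hn hfwd⟩ fun i => ⟨P i 1, .inl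
      ⟨hsrcE i, fun m hm he => hp.notMem_sources hA hE.adj m.succ_pos hm
        ((Prod.mk.inj he).1 ▸ (hP i).2.1)⟩⟩)
    fun i u hu => (hE'.adj hu).notMem_sources hA (hsrcA i)
  · rintro ⟨i, hi⟩
    apply hp0E (P i 1)
    rw [← hi]
    exact hsrcE i
  · exact (eq_and_eq_of_linkage (fun i => (hP i).1) hdisj (Nat.zero_le _) (Nat.zero_le _) h).1

theorem splitDigraph_linkage_succ_or_arcCut (hA : ∀ u v, Q u v → v ∉ A) {t : ℕ}
    (h : ExLinkage (splitDigraph Q) (A ×ˢ {false}) (B ×ˢ {true}) ∅ t) :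
    ExLinkage (splitDigraph Q) (A ×ˢ {false}) (B ×ˢ {true}) ∅ (t + 1) ∨
      ∃ F, F.Finite ∧ F.ncard ≤ t ∧
        SeparatesArcs (splitDigraph Q) (A ×ˢ {false}) (B ×ˢ {true}) F := by
  obtain ⟨P, len, hP, hdisj⟩ := h
  set Res := residualDigraph (splitDigraph Q) (⋃ i, walkEdges (P i) (len i))
  set S := {x | ∃ a ∈ A ×ˢ {false}, ReachIn Res Set.univ a x}
  by_cases hSB : Disjoint S (B ×ˢ {true})
  · refine .inr (exists_arcCut_of_residual_closed (P := P) (len := len) ?_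
      (fun a ha => show a ∈ S from ⟨a, ha, .refl trivial⟩) hSB)
    rintro x ⟨a, ha, hax⟩ y hxy
    exact ⟨a, ha, hax.tail hxy trivial⟩
  obtain ⟨b, ⟨a, ha, w, m, hw, hw0, hwm, -⟩, hb⟩ := Set.not_disjoint_iff.1 hSB
  obtain ⟨p, n, hpath, hp0, hpn⟩ := hw.exists_path
  exact .inl (IsAugmentingPath.linkage_succ hA hP hdisj ⟨hpath, hp0 ▸ hw0 ▸ ha, hpn ▸ hwm ▸ hb⟩)

theorem splitDigraph_linkage_or_arcCut (hA : ∀ u v, Q u v → v ∉ A) :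
    ∀ s, ExLinkage (splitDigraph Q) (A ×ˢ {false}) (B ×ˢ {true}) ∅ s ∨
      ∃ F, F.Finite ∧ F.ncard < s ∧ SeparatesArcs (splitDigraph Q) (A ×ˢ {false}) (B ×ˢ {true}) F
  | 0 => .inl ⟨Fin.elim0, Fin.elim0, fun i => i.elim0, fun i => i.elim0⟩
  | s + 1 => by
    rcases splitDigraph_linkage_or_arcCut hA s with h | ⟨F, hF, hcard, hsep⟩
    · exact (splitDigraph_linkage_succ_or_arcCut hA h).imp_right
        fun ⟨F, hF, hcard, hsep⟩ => ⟨F, hF, by omega, hsep⟩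
    · exact .inr ⟨F, hF, by omega, hsep⟩

lemma ExLinkage.of_splitDigraph {s : ℕ}
    (h : ExLinkage (splitDigraph Q) (A ×ˢ {false}) (B ×ˢ {true}) ∅ s) : ExLinkage Q A B ∅ s := by
  obtain ⟨P, len, hP, hdisj⟩ := h
  have hpar : ∀ i, ∀ j ≤ len i, (P i j).2 = decide (Odd j) := fun i =>
    (hP i).1.1.snd_eq_decide_odd (fun h => h.snd_eq) (hP i).2.1.2
  have hin : ∀ i j, 2 * j ≤ len i → P i (2 * j) = ((P i (2 * j)).1, false) := fun i j hj =>
    Prod.ext rfl (by simp [hpar i _ hj])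
  have hout : ∀ i j, 2 * j < len i → P i (2 * j + 1) = ((P i (2 * j)).1, true) := fun i j hj =>
    ((hP i).1.1 _ hj).target_eq_of_source_in (by simp [hpar i _ hj.le])
  have hodd : ∀ i, len i = 2 * (len i / 2) + 1 := fun i => by
    have := hpar i _ le_rfl
    rw [(hP i).2.2.1.2, eq_comm, decide_eq_true_iff, Nat.odd_iff] at this
    omega
  refine ⟨fun i j => (P i (2 * j)).1, fun i => len i / 2, fun i => ⟨⟨fun j hj => ?_,
    fun a ha b hb h => ?_⟩, (hP i).2.1.1, ?_, Set.disjoint_empty _⟩, fun i i' hii' => ?_⟩ <;>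
    beta_reduce at *
  · have := ((hP i).1.1 (2 * j + 1) (by omega)).adj_of_source_out (by rw [hout i j (by omega)])
    rwa [hout i j (by omega)] at this
  · have := (hP i).1.2 (2 * a) (by omega) (2 * b) (by omega)
      (by rw [hin i a (by omega), hin i b (by omega), h])
    omega
  · have := (hP i).2.2.1.1
    rwa [hodd i, hout i _ (by have := hodd i; omega)] at this
  · rw [Set.disjoint_left]
    rintro _ ⟨a, ha, rfl⟩ ⟨b, hb, h⟩
    beta_reduce at h
    exact hii' (eq_and_eq_of_linkage (fun i => (hP i).1) hdisj (i := i) (j := i') (a := 2 * a)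
      (b := 2 * b) (by omega) (by omega) (by rw [hin i a (by omega), hin i' b (by omega), h])).1

lemma Separates.of_splitDigraph {F : Set ((V × Bool) × (V × Bool))}
    (hF : SeparatesArcs (splitDigraph Q) (A ×ˢ {false}) (B ×ˢ {true}) F) :
    Separates Q A B ((fun e => e.2.1) '' F) := by
  intro w n hw h0 hn
  obtain ⟨j, hj, hjF⟩ := hF _ _ hw.splitLift ⟨by simpa using h0, by simp⟩
    ⟨by simpa [show (2 * n + 1) / 2 = n by omega] using hn, by simp⟩
  exact ⟨(j + 1) / 2, by omega, _, hjF, rfl⟩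

theorem menger (hA : ∀ u v, Q u v → v ∉ A) (s : ℕ) :
    ExLinkage Q A B ∅ s ∨ ∃ Y : Set V, Y.Finite ∧ Y.ncard < s ∧ Separates Q A B Y :=
  (splitDigraph_linkage_or_arcCut hA s).imp ExLinkage.of_splitDigraph
    fun ⟨_, hF, hcard, hsep⟩ => ⟨_, hF.image _, (Set.ncard_image_le hF).trans_lt hcard,
      Separates.of_splitDigraph hsep⟩

end Menger

def parityDigraph (R : V → V → Prop) (X : Set V) (x y : V × Bool) : Prop :=
  R x.1 y.1 ∧ y.2 = !x.2 ∧ y ∉ X ×ˢ {false} ∧ x ∉ X ×ˢ {true}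

section Parity

variable {R : V → V → Prop} {X : Set V}

lemma IsXWalk.parityLift {w : ℕ → V} {n : ℕ} (hw : IsXWalk R X w n) (hodd : Odd n) :
    IsWalkOn (parityDigraph R X) (fun j => (w j, decide (Odd j))) n := by
  obtain ⟨hwalk, -, -, hint⟩ := hw
  refine fun j hj => ⟨hwalk j hj, decide_odd_succ j, fun ⟨hX, hF⟩ => ?_, fun ⟨hX, hT⟩ => ?_⟩
  · rcases Nat.lt_or_ge (j + 1) n with h | h
    · exact hint _ j.succ_pos h hX
    · simp [show j + 1 = n by omega, hodd] at hF
  · rcases Nat.eq_zero_or_pos j with rfl | h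
    · simp at hT
    · exact hint j h hj hX

lemma IsWalkOn.parityProj {w : ℕ → V × Bool} {n : ℕ} (hw : IsWalkOn (parityDigraph R X) w n)
    (h0 : w 0 ∈ X ×ˢ {false}) (hn : w n ∈ X ×ˢ {true}) :
    IsXWalk R X (fun j => (w j).1) n ∧ Odd n := by
  have hpar := hw.snd_eq_decide_odd (fun h => h.2.1) h0.2
  refine ⟨⟨fun j hj => (hw j hj).1, h0.1, hn.1, fun i hi0 hin hX => ?_⟩, ?_⟩
  · cases hi : (w i).2
    · obtain ⟨l, rfl⟩ : ∃ l, i = l + 1 := ⟨i - 1, by omega⟩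
      exact (hw l (by omega)).2.2.1 ⟨hX, hi⟩
    · exact (hw i hin).2.2.2 ⟨hX, hi⟩
  · have := hpar n le_rfl
    rw [hn.2, eq_comm, decide_eq_true_iff] at this
    exact this

theorem halfPackOdd_or_halfPackOddXPaths_of_linkage {k : ℕ}
    (h : ExLinkage (parityDigraph R X) (X ×ˢ {false}) (X ×ˢ {true}) ∅ (4 * k)) :
    HalfPackOdd R k ∨ HalfPackOddXPaths R X k := by
  obtain ⟨P, len, hP, hdisj⟩ := h
  have hinj : ∀ {b : Bool} {f : Fin (4 * k) → ℕ}, (∀ i, f i ≤ len i) → (∀ i, (P i (f i)).2 = b) →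
      Injective fun i => (P i (f i)).1 := fun hf hb i j h =>
    (eq_and_eq_of_linkage (fun i => (hP i).1) hdisj (hf i) (hf j)
      (Prod.ext h ((hb i).trans (hb j).symm))).1
  refine halfPackOdd_or_halfPackOddXPaths_of_walks (q := fun i j => (P i j).1) (len := len)
    (by simp) (fun i => (hP i).1.1.parityProj (hP i).2.1 (hP i).2.2.1) (fun v => ?_)
    (hinj (fun _ => Nat.zero_le _) fun i => (hP i).2.1.2)
    (hinj (fun _ => le_rfl) fun i => (hP i).2.2.1.2)
  simp only [walkVerts_comp]
  simpa using ncard_setOf_mem_image_fst_le (S := fun i => walkVerts (P i) (len i))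
    (fun i j hij => hdisj i j hij) v

lemma separates_oddXWalks {Y : Set (V × Bool)}
    (hY : Separates (parityDigraph R X) (X ×ˢ {false}) (X ×ˢ {true}) Y) {w : ℕ → V} {n : ℕ}
    (hw : IsXWalk R X w n) (hodd : Odd n) : ∃ i ≤ n, w i ∈ Prod.fst '' Y := by
  obtain ⟨i, hi, hiY⟩ := hY _ n (hw.parityLift hodd) ⟨hw.2.1, by simp⟩ ⟨hw.2.2.1, by simp [hodd]⟩
  exact ⟨i, hi, _, hiY, rfl⟩

end Parity

theorem odd_X_walk_trichotomy_general (R : V → V → Prop) (X : Set V) (k : ℕ) :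
    (∃ (c : Fin k → ℕ → V) (len : Fin k → ℕ),
       (∀ i, IsCycleOn R (c i) (len i) ∧ Odd (len i)) ∧
       ∀ v, {i | v ∈ walkVerts (c i) (len i)}.ncard ≤ 2) ∨
    (∃ (p : Fin k → ℕ → V) (len : Fin k → ℕ),
       (∀ i, IsPathOn R (p i) (len i) ∧ IsXWalk R X (p i) (len i) ∧ Odd (len i)) ∧
       (∀ v, {i | v ∈ walkVerts (p i) (len i)}.ncard ≤ 2) ∧
       (∀ i j, i ≠ j →
         ({p i 0, p i (len i)} ∩ {p j 0, p j (len j)} : Set V) = ∅)) ∨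
    (∃ Y : Set V, Y.Finite ∧ Y.ncard ≤ 4 * k - 1 ∧
       ∀ (w : ℕ → V) (n : ℕ), IsXWalk R X w n → Odd n → ∃ i ≤ n, w i ∈ Y) := by
  rcases menger (Q := parityDigraph R X) (A := X ×ˢ {false}) (B := X ×ˢ {true})
    (fun _ _ h => h.2.2.1) (4 * k) with h | ⟨Y, hY, hcard, hsep⟩
  · exact (halfPackOdd_or_halfPackOddXPaths_of_linkage h).imp id .inl
  · refine .inr (.inr ⟨Prod.fst '' Y, hY.image _, ?_, fun _ _ => separates_oddXWalks hsep⟩)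
    have := Set.ncard_image_le (f := Prod.fst) hY
    omega

/-- Either a half-integral packing of k directed odd cycles, or a
half-integral packing of k directed odd X-paths with pairwise distinct endpoints,
or a set of at most 4k−1 vertices meeting all directed odd X-walks. -/
theorem odd_X_walk_trichotomy (R : V → V → Prop) (X : Set V) (k : ℕ) (hk : 0 < k) :
    (∃ (c : Fin k → ℕ → V) (len : Fin k → ℕ),
       (∀ i, IsCycleOn R (c i) (len i) ∧ Odd (len i)) ∧
       ∀ v, {i | v ∈ walkVerts (c i) (len i)}.ncard ≤ 2) ∨
    (∃ (p : Fin k → ℕ → V) (len : Fin k → ℕ),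
       (∀ i, IsPathOn R (p i) (len i) ∧ IsXWalk R X (p i) (len i) ∧ Odd (len i)) ∧
       (∀ v, {i | v ∈ walkVerts (p i) (len i)}.ncard ≤ 2) ∧
       (∀ i j, i ≠ j →
         ({p i 0, p i (len i)} ∩ {p j 0, p j (len j)} : Set V) = ∅)) ∨
    (∃ Y : Set V, Y.Finite ∧ Y.ncard ≤ 4 * k - 1 ∧
       ∀ (w : ℕ → V) (n : ℕ), IsXWalk R X w n → Odd n → ∃ i ≤ n, w i ∈ Y) :=
  odd_X_walk_trichotomy_general R X k
end

section
/- Let k and r be positive integers with k ≥ r, and let G be a digraph. Every r-well-linked set of size 4k+1 in G is a k-linked set. -/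
variable {V : Type}

/-!
Fix `X` with `|X| < k` and order `S = T \ X` topologically by the strong components of
`G - X`. Let `B` be the `k` lowest and `A` the `k` highest vertices of `S`, and link `A` to `B`
by well-linkedness. At most `|X \ T| < k` of the paths meet `X`; a path avoiding `X` cannot
descend, so it stays inside one strong component, which then contains every vertex of `S`
outside `A ∪ B` together with both ends of every such path: more than half of `T`. Two strong
components each holding more than half of `T` meet, hence coincide.
-/

namespace ReachIn

variable {R : V → V → Prop} {S : Set V} {u v w : V}

theorem refl_s8 (hu : u ∈ S) : ReachIn R S u u :=
  ⟨fun _ => u, 0, fun _ h => absurd h (Nat.not_lt_zero _), rfl, rfl, fun _ _ => hu⟩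

theorem mem_left (h : ReachIn R S u v) : u ∈ S := by
  obtain ⟨p, n, -, rfl, -, hpS⟩ := h
  exact hpS 0 n.zero_le

theorem trans (huv : ReachIn R S u v) (hvw : ReachIn R S v w) : ReachIn R S u w := by
  obtain ⟨p, m, hp, rfl, rfl, hpS⟩ := huv
  obtain ⟨q, n, hq, hq0, rfl, hqS⟩ := hvw
  set c : ℕ → V := fun i => if i ≤ m then p i else q (i - m) with hc
  have hc_right : ∀ i, m ≤ i → c i = q (i - m) := by
    intro i hi
    rcases hi.eq_or_lt with rfl | hi
    · simp [hc, hq0]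
    · simp [hc, Nat.not_le.mpr hi]
  refine ⟨c, m + n, fun i hi => ?_, by simp [hc], by simp [hc_right], fun i hi => ?_⟩
  · by_cases him : i < m
    · simpa [hc, him.le, Nat.succ_le_of_lt him] using hp i him
    · rw [hc_right i (by omega), hc_right (i + 1) (by omega), Nat.sub_add_comm (by omega)]
      exact hq (i - m) (by omega)
  · by_cases him : i ≤ m
    · simpa [hc, him] using hpS i him
    · rw [hc_right i (by omega)]
      exact hqS (i - m) (by omega)

end ReachIn

def sccOf (R : V → V → Prop) (S : Set V) (x : V) : Set V :=
  {v | ReachIn R S v x ∧ ReachIn R S x v}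

theorem isSCCOf_sccOf (R : V → V → Prop) {S : Set V} {x : V} (hx : x ∈ S) :
    IsSCCOf R S (sccOf R S x) := by
  have hxx : x ∈ sccOf R S x := ⟨.refl hx, .refl hx⟩
  refine ⟨⟨x, hxx⟩, fun v hv => hv.1.mem_left, fun u hu v hv => hu.1.trans hv.2, ?_⟩
  intro C hsub _ hC
  exact (hsub.antisymm fun v hv => ⟨hC v hv x (hsub hxx), hC x (hsub hxx) v hv⟩).symm

theorem IsSCCOf.eq_of_mem {R : V → V → Prop} {S C₁ C₂ : Set V} (h₁ : IsSCCOf R S C₁)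
    (h₂ : IsSCCOf R S C₂) {v : V} (hv₁ : v ∈ C₁) (hv₂ : v ∈ C₂) : C₁ = C₂ := by
  have hunion : StrongIn R S (C₁ ∪ C₂) := by
    have through_v : ∀ a ∈ C₁ ∪ C₂, ReachIn R S a v ∧ ReachIn R S v a := by
      rintro a (ha | ha)
      · exact ⟨h₁.2.2.1 a ha v hv₁, h₁.2.2.1 v hv₁ a ha⟩
      · exact ⟨h₂.2.2.1 a ha v hv₂, h₂.2.2.1 v hv₂ a ha⟩
    exact fun a ha b hb => (through_v a ha).1.trans (through_v b hb).2
  have hS : C₁ ∪ C₂ ⊆ S := Set.union_subset h₁.2.1 h₂.2.1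
  exact (h₁.2.2.2 _ Set.subset_union_left hS hunion).symm.trans
    (h₂.2.2.2 _ Set.subset_union_right hS hunion)

section PredKey

open Classical in
/-- A linear order refining reachability in `S` whose levels on `P` are the strong classes. -/
noncomputable def predKey (R : V → V → Prop) (S : Set V) (P : Finset V) (v : V) :
    LinearExtension (Finset V) :=
  toLinearExtension (P.filter (ReachIn R S · v))

variable {R : V → V → Prop} {S : Set V} {P : Finset V} {u x : V}

theorem predKey_mono (h : ReachIn R S u x) : predKey R S P u ≤ predKey R S P x := by
  classical
  refine toLinearExtension.monotone fun w hw => ?_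
  simp only [Finset.mem_filter] at hw ⊢
  exact ⟨hw.1, hw.2.trans h⟩

theorem mem_sccOf_of_predKey_eq (hu : u ∈ P) (hx : x ∈ P) (huS : u ∈ S) (hxS : x ∈ S)
    (h : predKey R S P u = predKey R S P x) : u ∈ sccOf R S x := by
  classical
  have hpred : P.filter (ReachIn R S · u) = P.filter (ReachIn R S · x) := h
  have mem_pred : ∀ w ∈ P, w ∈ S → w ∈ P.filter (ReachIn R S · w) := fun w hw hwS =>
    Finset.mem_filter.mpr ⟨hw, .refl hwS⟩
  have hux : u ∈ P.filter (ReachIn R S · x) := hpred ▸ mem_pred u hu huS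
  have hxu : x ∈ P.filter (ReachIn R S · u) := hpred ▸ mem_pred x hx hxS
  exact ⟨(Finset.mem_filter.mp hux).2, (Finset.mem_filter.mp hxu).2⟩

end PredKey

namespace Finset

variable {α β ι : Type*} [LinearOrder β] (f : α → β)

theorem exists_subset_card_eq_forall_le (s : Finset α) {k : ℕ} (hk : k ≤ s.card) :
    ∃ t ⊆ s, t.card = k ∧ ∀ x ∈ t, ∀ y ∈ s, y ∉ t → f x ≤ f y := by
  classical
  induction k with
  | zero => exact ⟨∅, empty_subset s, card_empty, by simp⟩
  | succ k ih =>
    obtain ⟨t, hts, htk, ht⟩ := ih (by omega)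
    have hne : (s \ t).Nonempty := by
      rw [← card_pos, card_sdiff_of_subset hts]
      omega
    obtain ⟨m, hm, hmin⟩ := (s \ t).exists_min_image f hne
    rw [mem_sdiff] at hm
    refine ⟨insert m t, insert_subset hm.1 hts, by rw [card_insert_of_notMem hm.2, htk], ?_⟩
    intro x hx y hy hyt
    rw [mem_insert, not_or] at hyt
    rcases mem_insert.mp hx with rfl | hx
    · exact hmin y (mem_sdiff.mpr ⟨hy, hyt.2⟩)
    · exact ht x hx y hy hyt.2

theorem exists_disjoint_upper_lower (S : Finset α) {k : ℕ} (hk : 2 * k ≤ S.card) :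
    ∃ A ⊆ S, ∃ B ⊆ S, Disjoint A B ∧ A.card = k ∧ B.card = k ∧
      (∀ a ∈ A, ∀ u ∈ S, u ∉ A → f u ≤ f a) ∧ (∀ b ∈ B, ∀ u ∈ S, u ∉ B → f b ≤ f u) := by
  classical
  obtain ⟨B, hBS, hBk, hB⟩ := S.exists_subset_card_eq_forall_le f (by omega : k ≤ S.card)
  obtain ⟨A, hAS, hAk, hA⟩ := (S \ B).exists_subset_card_eq_forall_le (OrderDual.toDual ∘ f)
    (k := k) (by rw [card_sdiff_of_subset hBS]; omega)
  refine ⟨A, hAS.trans sdiff_subset, B, hBS, disjoint_of_subset_left hAS sdiff_disjoint,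
    hAk, hBk, fun a ha u hu huA => ?_, hB⟩
  obtain ⟨haS, haB⟩ := mem_sdiff.mp (hAS ha)
  by_cases huB : u ∈ B
  · exact hB u huB a haS haB
  · exact hA a ha u (mem_sdiff.mpr ⟨hu, huB⟩) huA

/-- All pairs lie on the level of `f (s i₀)`; below it only `B` minus the pair ends can lie,
above it only `A` minus the pair starts. -/
theorem exists_card_add_two_mul_le_card_filter_eq {S A B : Finset α} {k : ℕ}
    (hAS : A ⊆ S) (hAB : Disjoint A B) (hAk : A.card = k) (hBk : B.card = k)
    (hA : ∀ a ∈ A, ∀ u ∈ S, u ∉ A → f u ≤ f a) (hB : ∀ b ∈ B, ∀ u ∈ S, u ∉ B → f b ≤ f u)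
    {I : Finset ι} (hI : I.Nonempty) {s t : ι → α} (hs : Set.InjOn s I) (ht : Set.InjOn t I)
    (hsA : ∀ i ∈ I, s i ∈ A) (htB : ∀ i ∈ I, t i ∈ B) (hst : ∀ i ∈ I, f (s i) ≤ f (t i)) :
    ∃ x ∈ S, S.card + 2 * I.card ≤ 2 * k + (S.filter (f · = f x)).card := by
  classical
  obtain ⟨i₀, hi₀⟩ := hI
  have hsS : ∀ i ∈ I, s i ∈ S := fun i hi => hAS (hsA i hi)
  have hsB : ∀ i ∈ I, s i ∉ B := fun i hi => disjoint_left.mp hAB (hsA i hi)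
  have ht_le : ∀ i ∈ I, f (t i) ≤ f (s i₀) := fun i hi =>
    hB _ (htB i hi) _ (hsS i₀ hi₀) (hsB i₀ hi₀)
  have hs_ge : ∀ i ∈ I, f (s i₀) ≤ f (s i) := fun i hi =>
    (hst i₀ hi₀).trans (hB _ (htB i₀ hi₀) _ (hsS i hi) (hsB i hi))
  have hs_eq : ∀ i ∈ I, f (s i) = f (s i₀) := fun i hi =>
    le_antisymm ((hst i hi).trans (ht_le i hi)) (hs_ge i hi)
  have ht_eq : ∀ i ∈ I, f (t i) = f (s i₀) := fun i hi =>
    le_antisymm (ht_le i hi) ((hs_ge i hi).trans (hst i hi))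
  have hcover : S ⊆ (B \ I.image t ∪ A \ I.image s) ∪ S.filter (f · = f (s i₀)) := by
    intro u hu
    simp only [mem_union, mem_sdiff, mem_image, mem_filter, not_exists, not_and]
    rcases lt_trichotomy (f u) (f (s i₀)) with h | h | h
    · refine .inl (.inl ⟨by_contra fun huB => ?_, fun i hi hiu => ?_⟩)
      · exact h.not_ge ((ht_eq i₀ hi₀).ge.trans (hB _ (htB i₀ hi₀) u hu huB))
      · exact h.ne (hiu ▸ ht_eq i hi)
    · exact .inr ⟨hu, h⟩
    · refine .inl (.inr ⟨by_contra fun huA => h.not_ge (hA _ (hsA i₀ hi₀) u hu huA),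
        fun i hi hiu => h.ne' (hiu ▸ hs_eq i hi)⟩)
  have hBt : (B \ I.image t).card = k - I.card := by
    rw [card_sdiff_of_subset (image_subset_iff.mpr htB), card_image_of_injOn ht, hBk]
  have hAs : (A \ I.image s).card = k - I.card := by
    rw [card_sdiff_of_subset (image_subset_iff.mpr hsA), card_image_of_injOn hs, hAk]
  have hIk : I.card ≤ k :=
    hBk ▸ card_image_of_injOn ht ▸ card_le_card (image_subset_iff.mpr htB)
  refine ⟨s i₀, hsS i₀ hi₀, ?_⟩
  have := (card_le_card hcover).trans ((card_union_le _ _).trans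
    (Nat.add_le_add_right (card_union_le _ _) _))
  omega

end Finset

open Classical in
theorem Fintype.card_le_card_filter_disjoint_add {α ι : Type*} [Fintype ι] {F : ι → Set α}
    (hF : Pairwise (Function.onFun Disjoint F)) (X : Set α) (Y : Finset α)
    (hY : ∀ i, F i ∩ X ⊆ Y) :
    Fintype.card ι ≤ (Finset.univ.filter fun i => Disjoint (F i) X).card + Y.card := by
  have hmeet_card : (Finset.univ.filter fun i => ¬Disjoint (F i) X).card ≤ Y.card := by
    refine (Finset.card_le_card_biUnion (f := fun i => Y.filter (· ∈ F i)) ?_ ?_).trans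
      (Finset.card_le_card (Finset.biUnion_subset.mpr fun _ _ => Finset.filter_subset _ Y))
    · exact fun i _ j _ hij => Finset.disjoint_left.mpr fun v hvi hvj =>
        Set.disjoint_left.mp (hF hij) (Finset.mem_filter.mp hvi).2 (Finset.mem_filter.mp hvj).2
    · intro i hi
      obtain ⟨y, hyF, hyX⟩ := Set.not_disjoint_iff.mp (Finset.mem_filter.mp hi).2
      exact ⟨y, Finset.mem_filter.mpr ⟨hY i ⟨hyF, hyX⟩, hyF⟩⟩
  have := Finset.card_filter_add_card_filter_not (s := Finset.univ) fun i => Disjoint (F i) X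
  rw [Finset.card_univ] at this
  omega

theorem ExLinkage.exists_reachIn_compl {R : V → V → Prop} {A B Z : Set V} {n : ℕ}
    (h : ExLinkage R A B Z n) (X : Set V) (Y : Finset V) (hXY : X \ Z ⊆ Y) :
    ∃ I : Finset (Fin n), n ≤ I.card + Y.card ∧ ∃ a b : Fin n → V,
      Function.Injective a ∧ Function.Injective b ∧
      ∀ i ∈ I, a i ∈ A ∧ b i ∈ B ∧ ReachIn R Xᶜ (a i) (b i) := by
  classical
  obtain ⟨P, len, hP, hdisj⟩ := h
  have hF : Pairwise (Function.onFun Disjoint fun i => walkVerts (P i) (len i)) := hdisj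
  have hinj : ∀ j : Fin n → ℕ, (∀ i, j i ≤ len i) → Function.Injective fun i => P i (j i) :=
    fun j hj i i' he => hF.eq (Set.not_disjoint_iff.mpr
      ⟨P i (j i), ⟨j i, hj i, rfl⟩, ⟨j i', hj i', he.symm⟩⟩)
  have hmeet : ∀ i, walkVerts (P i) (len i) ∩ X ⊆ Y := fun i v ⟨hv, hvX⟩ =>
    hXY ⟨hvX, Set.disjoint_left.mp (hP i).2.2.2 hv⟩
  refine ⟨_, Fintype.card_fin n ▸ Fintype.card_le_card_filter_disjoint_add hF X Y hmeet,
    fun i => P i 0, fun i => P i (len i), hinj _ fun _ => Nat.zero_le _, hinj _ fun _ => le_rfl,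
    fun i hi => ⟨(hP i).2.1, (hP i).2.2.1, P i, len i, (hP i).1.1, rfl, rfl, fun j hj => ?_⟩⟩
  exact Set.disjoint_left.mp (Finset.mem_filter.mp hi).2 ⟨j, hj, rfl⟩

theorem Finset.inter_nonempty_of_card_lt_two_mul_ncard {α : Type*} (T : Finset α)
    {C C' : Set α}
    (h : T.card < 2 * (↑T ∩ C).ncard) (h' : T.card < 2 * (↑T ∩ C').ncard) :
    (C ∩ C').Nonempty := by
  classical
  have hcard : ∀ D : Set α, (↑T ∩ D).ncard = (T.filter (· ∈ D)).card := fun D => by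
    rw [← Set.ncard_coe_finset, Finset.coe_filter]
    rfl
  rw [hcard] at h h'
  obtain ⟨v, hv⟩ := Finset.inter_nonempty_of_card_lt_card_add_card
    (Finset.filter_subset (· ∈ C) T) (Finset.filter_subset (· ∈ C') T) (by omega)
  simp only [Finset.mem_inter, Finset.mem_filter] at hv
  exact ⟨v, hv.1.2, hv.2.2⟩

theorem existsUnique_isSCCOf_of_majority {R : V → V → Prop} {W : Set V} {T : Finset V}
    (h : ∃ C, IsSCCOf R W C ∧ T.card < 2 * (↑T ∩ C).ncard) :
    ∃! C, IsSCCOf R W C ∧ T.card < 2 * (↑T ∩ C).ncard := by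
  obtain ⟨C, hC, hCT⟩ := h
  refine ⟨C, ⟨hC, hCT⟩, fun C' ⟨hC', hC'T⟩ => ?_⟩
  obtain ⟨v, hv', hv⟩ := T.inter_nonempty_of_card_lt_two_mul_ncard hC'T hCT
  exact hC'.eq_of_mem hC hv' hv

theorem WellLinked.exists_majority_isSCCOf {R : V → V → Prop} {T : Finset V} {k r : ℕ}
    (hkr : r ≤ k) (hcard : T.card = 4 * k + 1) (hwl : WellLinked R T r) {X : Finset V}
    (hX : X.card < k) :
    ∃ C, IsSCCOf R (↑X)ᶜ C ∧ T.card < 2 * (↑T ∩ C).ncard := by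
  classical
  set S := T \ X
  have hST : S.card + (T ∩ X).card = 4 * k + 1 := hcard ▸ Finset.card_sdiff_add_card_inter T X
  have hXT : (X \ T).card + (X ∩ T).card = X.card := Finset.card_sdiff_add_card_inter X T
  rw [Finset.inter_comm] at hST
  obtain ⟨A, hAS, B, hBS, hAB, hAk, hBk, hA, hB⟩ :=
    S.exists_disjoint_upper_lower (predKey R (↑X)ᶜ S) (k := k) (by omega)
  obtain ⟨hlink, -⟩ := hwl A B (hAS.trans Finset.sdiff_subset) (hBS.trans Finset.sdiff_subset)
    hAB (hAk.trans hBk.symm) (hAk ▸ hkr)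
  have hXZ : ↑X \ (↑T \ (↑A ∪ ↑B)) ⊆ (↑(X \ T) : Set V) := by
    rintro v ⟨hvX, hvZ⟩
    refine Finset.mem_sdiff.mpr ⟨hvX, fun hvT => ?_⟩
    rcases not_and_not_right.mp hvZ hvT with hvA | hvB
    · exact (Finset.mem_sdiff.mp (hAS hvA)).2 hvX
    · exact (Finset.mem_sdiff.mp (hBS hvB)).2 hvX
  obtain ⟨I, hI, a, b, ha, hb, hab⟩ := hlink.exists_reachIn_compl (↑X) (X \ T) hXZ
  obtain ⟨x, hxS, hlevel⟩ := Finset.exists_card_add_two_mul_le_card_filter_eq _ hAS hAB hAk hBk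
    hA hB (Finset.card_pos.mp (by omega)) ha.injOn hb.injOn (fun i hi => (hab i hi).1)
    (fun i hi => (hab i hi).2.1) (fun i hi => predKey_mono (hab i hi).2.2)
  have hSX : ∀ v ∈ S, v ∈ (↑X : Set V)ᶜ := fun v hv => (Finset.mem_sdiff.mp hv).2
  have hlevel_sub : ↑(S.filter (predKey R (↑X)ᶜ S · = predKey R (↑X)ᶜ S x)) ⊆
      ↑T ∩ sccOf R (↑X)ᶜ x := fun u hu => by
    obtain ⟨huS, hu⟩ := Finset.mem_filter.mp hu
    exact ⟨(Finset.mem_sdiff.mp huS).1,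
      mem_sccOf_of_predKey_eq huS hxS (hSX u huS) (hSX x hxS) hu⟩
  have := Set.ncard_coe_finset _ ▸
    Set.ncard_le_ncard hlevel_sub (T.finite_toSet.subset Set.inter_subset_left)
  exact ⟨sccOf R (↑X)ᶜ x, isSCCOf_sccOf R (hSX x hxS), by omega⟩

theorem well_linked_is_linked_general (R : V → V → Prop) (k r : ℕ)
    (hkr : r ≤ k) (T : Finset V) (hcard : T.card = 4 * k + 1)
    (hwl : WellLinked R T r) :
    KLinked R T k := fun _ hX =>
  existsUnique_isSCCOf_of_majority (hwl.exists_majority_isSCCOf hkr hcard hX)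

/-- Every r-well-linked set of size 4k+1 is k-linked (for k ≥ r ≥ 1). -/
theorem well_linked_is_linked (R : V → V → Prop) (k r : ℕ) (hr : 0 < r)
    (hkr : r ≤ k) (T : Finset V) (hcard : T.card = 4 * k + 1)
    (hwl : WellLinked R T r) :
    KLinked R T k :=
  well_linked_is_linked_general R k r hkr T hcard hwl
end

section
/- Let G be a digraph and let G^t be the digraph obtained from G by replacing each vertex v by t copies v^1, ..., v^t, where for every edge (u,v) of G and all i, j ∈ {1,...,t} there is an edge (u^i, v^j) in G^t. Let A, B ⊆ V(G) and let A', B' be the corresponding sets of all copies in G^t. Then G contains a (1/t)-integral linkage of order m from A to B if and only if G^t contains m pairwise vertex-disjoint directed paths from A' to B'. -/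
variable {V : Type}

/-- Every walk contains a path with the same endpoints whose vertices are among
those of the walk. -/
lemma exists_path_of_walk (R : V → V → Prop) :
    ∀ n (w : ℕ → V), IsWalkOn R w n →
    ∃ p m, IsPathOn R p m ∧ p 0 = w 0 ∧ p m = w n ∧ walkVerts p m ⊆ walkVerts w n := by
  intro n
  induction n using Nat.strong_induction_on with
  | _ n IH =>
    intro w hw
    by_cases hinj : ∀ i ≤ n, ∀ j ≤ n, w i = w j → i = j
    · exact ⟨w, n, ⟨hw, hinj⟩, rfl, rfl, fun v hv => hv⟩
    · push_neg at hinj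
      obtain ⟨a, ha, b, hb, heqab, hneab⟩ := hinj
      -- get i < j with w i = w j, j ≤ n
      obtain ⟨i, j, hij, hjn, heq⟩ : ∃ i j, i < j ∧ j ≤ n ∧ w i = w j := by
        rcases lt_or_gt_of_ne hneab with h | h
        · exact ⟨a, b, h, hb, heqab⟩
        · exact ⟨b, a, h, ha, heqab.symm⟩
      set d := j - i with hd_def
      have hd : 0 < d := Nat.sub_pos_of_lt hij
      have hid : i + d = j := Nat.add_sub_cancel' hij.le
      have hdn : d ≤ n := le_trans (Nat.sub_le j i) hjn
      set n' := n - d with hn'_def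
      have hn'd : n' + d = n := Nat.sub_add_cancel hdn
      have hn'lt : n' < n := by
        have hnpos : 0 < n := lt_of_lt_of_le (lt_of_le_of_lt (Nat.zero_le i) hij) hjn
        exact Nat.sub_lt hnpos hd
      set w' : ℕ → V := fun k => if k ≤ i then w k else w (k + d) with hw'_def
      have hkey : ∀ k, i ≤ k → w' k = w (k + d) := by
        intro k hk
        by_cases h : k ≤ i
        · have : k = i := le_antisymm h hk
          simp [hw'_def, h, this, hid, heq]
        · simp [hw'_def, h]
      have hw' : IsWalkOn R w' n' := by
        intro k hk
        by_cases h : k + 1 ≤ i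
        · have hki : k ≤ i := le_trans (Nat.le_succ k) h
          have hkn : k < n := lt_of_lt_of_le (lt_of_lt_of_le (Nat.lt_succ_self k) h)
            (le_trans hij.le hjn)
          simp only [hw'_def]
          simp [hki, h]
          exact hw k hkn
        · push_neg at h
          have hik : i ≤ k := Nat.lt_succ_iff.mp h
          rw [hkey k hik, hkey (k + 1) (le_trans hik (Nat.le_succ k))]
          have : k + d < n := by omega
          have := hw (k + d) this
          convert this using 2
          omega
      have h0 : w' 0 = w 0 := by simp [hw'_def]
      have hend : w' n' = w n := by
        have hin' : i ≤ n' := by omega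
        rw [hkey n' hin', hn'd]
      have hsub : walkVerts w' n' ⊆ walkVerts w n := by
        rintro v ⟨k, hk, rfl⟩
        by_cases h : k ≤ i
        · exact ⟨k, by omega, by simp [hw'_def, h]⟩
        · exact ⟨k + d, by omega, by simp [hw'_def, h]⟩
      obtain ⟨p, m, hp, hp0, hpm, hpsub⟩ := IH n' hn'lt w' hw'
      exact ⟨p, m, hp, hp0.trans h0, hpm.trans hend, hpsub.trans hsub⟩

/-- G has a (1/t)-integral linkage of order m from A to B iff the
t-fold blow-up G^t has m pairwise vertex-disjoint directed paths from A' to B'. -/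
theorem blowup_linkage_iff (R : V → V → Prop) (t m : ℕ) (ht : 0 < t)
    (A B : Set V) :
    (∃ (P : Fin m → ℕ → V) (len : Fin m → ℕ),
       (∀ i, IsPathOn R (P i) (len i) ∧ P i 0 ∈ A ∧ P i (len i) ∈ B) ∧
       ∀ v : V, {i | v ∈ walkVerts (P i) (len i)}.ncard ≤ t) ↔
    (∃ (Q : Fin m → ℕ → V × Fin t) (len : Fin m → ℕ),
       (∀ i, IsPathOn (fun p q : V × Fin t => R p.1 q.1) (Q i) (len i) ∧
          (Q i 0).1 ∈ A ∧ (Q i (len i)).1 ∈ B) ∧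
       ∀ i j, i ≠ j →
         Disjoint (walkVerts (Q i) (len i)) (walkVerts (Q j) (len j))) := by
  classical
  constructor
  · rintro ⟨P, len, hP, hcard⟩
    -- for each vertex v, embed the set of paths through v into Fin t
    have hemb : ∀ v : V, ∃ g : {i : Fin m // v ∈ walkVerts (P i) (len i)} → Fin t,
        Function.Injective g := by
      intro v
      set S : Set (Fin m) := {i | v ∈ walkVerts (P i) (len i)} with hS
      have hfin : S.Finite := Set.toFinite S
      have : Fintype ↥S := hfin.fintype
      have hle : Fintype.card ↥S ≤ Fintype.card (Fin t) := by
        rw [Fintype.card_fin]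
        calc Fintype.card ↥S = S.ncard := by
              rw [Set.ncard_eq_toFinset_card' S]; simp [Set.toFinset_card]
          _ ≤ t := hcard v
      obtain ⟨g⟩ := Function.Embedding.nonempty_of_card_le hle
      exact ⟨fun x => g ⟨x.1, x.2⟩, fun x y hxy => by
        have := g.injective hxy
        exact Subtype.ext (congrArg Subtype.val this)⟩
    choose g hg using hemb
    set f : V → Fin m → Fin t := fun v i =>
      if h : v ∈ walkVerts (P i) (len i) then g v ⟨i, h⟩ else ⟨0, ht⟩ with hf
    refine ⟨fun i k => (P i k, f (P i k) i), len, fun i => ?_, ?_⟩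
    · obtain ⟨⟨hwalk, hinj⟩, h0, hend⟩ := hP i
      exact ⟨⟨fun k hk => hwalk k hk,
        fun a ha b hb hab => hinj a ha b hb (congrArg Prod.fst hab)⟩, h0, hend⟩
    · intro i j hij
      rw [Set.disjoint_left]
      rintro ⟨v, c⟩ ⟨a, ha, hQa⟩ ⟨b, hb, hQb⟩
      have hva : P i a = v := congrArg Prod.fst hQa
      have hvb : P j b = v := congrArg Prod.fst hQb
      have hvi : v ∈ walkVerts (P i) (len i) := ⟨a, ha, hva⟩
      have hvj : v ∈ walkVerts (P j) (len j) := ⟨b, hb, hvb⟩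
      have hca : f v i = c := by rw [← hva] at hQa ⊢; exact congrArg Prod.snd hQa
      have hcb : f v j = c := by rw [← hvb] at hQb ⊢; exact congrArg Prod.snd hQb
      have : g v ⟨i, hvi⟩ = g v ⟨j, hvj⟩ := by
        rw [hf] at hca hcb
        simp only [hvi, dif_pos] at hca
        simp only [hvj, dif_pos] at hcb
        rw [hca, hcb]
      exact hij (congrArg (Subtype.val) (hg v this))
  · rintro ⟨Q, len, hQ, hdisj⟩
    -- project each path to V and extract a path from the resulting walk
    have hwalk : ∀ i, IsWalkOn R (fun k => (Q i k).1) (len i) :=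
      fun i k hk => (hQ i).1.1 k hk
    choose p plen hpath hp0 hpend hpsub using
      fun i => exists_path_of_walk R (len i) (fun k => (Q i k).1) (hwalk i)
    refine ⟨p, plen, fun i => ⟨hpath i, by rw [hp0 i]; exact (hQ i).2.1,
      by rw [hpend i]; exact (hQ i).2.2⟩, ?_⟩
    intro v
    set T : Set (Fin m) := {i | ∃ c : Fin t, (v, c) ∈ walkVerts (Q i) (len i)} with hT
    have hsub : {i | v ∈ walkVerts (p i) (plen i)} ⊆ T := by
      intro i hi
      obtain ⟨k, hk, hkv⟩ := hpsub i hi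
      exact ⟨(Q i k).2, k, hk, by rw [← hkv]⟩
    set c : Fin m → Fin t := fun i =>
      if h : ∃ c : Fin t, (v, c) ∈ walkVerts (Q i) (len i) then h.choose else ⟨0, ht⟩
      with hc
    have hcmem : ∀ i ∈ T, (v, c i) ∈ walkVerts (Q i) (len i) := by
      intro i hi
      have hci : c i = hi.choose := dif_pos hi
      rw [hci]
      exact hi.choose_spec
    have hinjT : Set.InjOn c T := by
      intro i hi j hj hcc
      by_contra hne
      have := hdisj i j hne
      rw [Set.disjoint_left] at this
      exact this (hcmem i hi) (hcc ▸ hcmem j hj)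
    calc {i | v ∈ walkVerts (p i) (plen i)}.ncard
        ≤ T.ncard := Set.ncard_le_ncard hsub (Set.toFinite T)
      _ ≤ (Set.univ : Set (Fin t)).ncard :=
          Set.ncard_le_ncard_of_injOn c (fun i _ => Set.mem_univ _) hinjT
            (Set.toFinite _)
      _ = t := by rw [Set.ncard_univ]; simp
end
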